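/- arXiv:0801.3986 — 7 statements merged into one kernel-verified Lean document; each statement's English description precedes it below -/
import Mathlib

section
/- Let n and d be positive integers with d ≤ n, let x ∈ S_n be a permutation of weight i, and let j be a positive integer. Then the number of permutations y ∈ S_n of weight j with Hamming distance d(x,y) ≤ d−1 is at most L_{i,j}. -/
open Finset

/-- Hamming distance between two permutations of `{0,…,n-1}`. -/
def permDist {n : ℕ} (x y : Equiv.Perm (Fin n)) : ℕ :=
  (Finset.univ.filter fun i => x i ≠ y i).card

/-- Weight of a permutation: number of non-fixed points. -/
def permWt {n : ℕ} (x : Equiv.Perm (Fin n)) : ℕ :=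
  (Finset.univ.filter fun i => x i ≠ i).card

/-- `C` is an `(n,d)` permutation array. -/
def IsPA (n d : ℕ) (C : Finset (Equiv.Perm (Fin n))) : Prop :=
  ∀ x ∈ C, ∀ y ∈ C, x ≠ y → d ≤ permDist x y

/-- `P(n,d)`: the maximum size of an `(n,d)` permutation array. -/
noncomputable def Pmax (n d : ℕ) : ℕ :=
  sSup {m | ∃ C : Finset (Equiv.Perm (Fin n)), IsPA n d C ∧ C.card = m}

/-- `P[n,e]`: the maximum size of a subset of `S_n` with pairwise distances at most `e`. -/
noncomputable def PmaxLe (n e : ℕ) : ℕ :=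
  sSup {m | ∃ Γ : Finset (Equiv.Perm (Fin n)),
    (∀ x ∈ Γ, ∀ y ∈ Γ, x ≠ y → permDist x y ≤ e) ∧ Γ.card = m}

/-- `V(n,r) = Σ_{i=0}^{r} C(n,i)·D_i`. -/
def V (n r : ℕ) : ℕ := ∑ i ∈ Finset.range (r + 1), Nat.choose n i * numDerangements i

/-- `V₂(n,r) = Σ_{i=0}^{r} C(n,i)`. -/
def V2 (n r : ℕ) : ℕ := ∑ i ∈ Finset.range (r + 1), Nat.choose n i

/-- `L_{i,j}` (depending also on `n` and `d`). -/
def L (n d i j : ℕ) : ℕ :=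
  ∑ k ∈ Finset.Icc ((i + j + 1 - d + 1) / 2) (min i j),
    ∑ l ∈ Finset.range (min (d + 2 * k - i - j - 1) k + 1),
      Nat.choose i k * Nat.choose (n - i) (j - k) * Nat.choose k l *
        Nat.factorial (l + j - k)

/-- `T`: number of unordered pairs of distinct permutations in `S_n`, each of weight
between `1` and `d-1`, with Hamming distance at most `d-1`. -/
def Tperm (n d : ℕ) : ℕ :=
  ((Finset.univ : Finset (Equiv.Perm (Fin n) × Equiv.Perm (Fin n))).filter
    (fun p => p.1 ≠ p.2 ∧ 1 ≤ permWt p.1 ∧ permWt p.1 ≤ d - 1 ∧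
      1 ≤ permWt p.2 ∧ permWt p.2 ≤ d - 1 ∧ permDist p.1 p.2 ≤ d - 1)).card / 2

/-- Hamming weight of a binary vector. -/
def binWt {n : ℕ} (u : Fin n → Bool) : ℕ := (Finset.univ.filter fun i => u i ≠ false).card

/-- Hamming distance between binary vectors. -/
def binDist {n : ℕ} (u v : Fin n → Bool) : ℕ := (Finset.univ.filter fun i => u i ≠ v i).card

/-- `T′`: number of unordered pairs of distinct nonzero binary vectors of length `n`,
each of Hamming weight at most `d-1`, with Hamming distance at most `d-1`. -/
def Tbin (n d : ℕ) : ℕ :=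
  ((Finset.univ : Finset ((Fin n → Bool) × (Fin n → Bool))).filter
    (fun p => p.1 ≠ p.2 ∧ p.1 ≠ (fun _ => false) ∧ p.2 ≠ (fun _ => false) ∧
      binWt p.1 ≤ d - 1 ∧ binWt p.2 ≤ d - 1 ∧ binDist p.1 p.2 ≤ d - 1)).card / 2

/-!
Let `A`, `B` be the supports of `x` and `y`, `K = A ∩ B`, `S = B \ A`, and `D ⊆ K` the set where
`x` and `y` differ. Then `d(x, y) = |A \ B| + |S| + |D| = i + j - 2k + l` with `k = |K|`,
`l = |D|`, which confines `(k, l)` to the index range of `L`. Given `K`, `D`, `S` (in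
`C(i,k) C(k,l) C(n-i,j-k)` ways), `y` agrees with `x` on `K \ D` and fixes every point outside
`K ∪ S`, so it is determined by an injection of `D ∪ S` into `(K ∪ S) \ x(K \ D)`, a set of size
`l + j - k`.
-/

namespace Equiv.Perm

variable {α : Type*} [Fintype α] [DecidableEq α]

def supportDisagreement (x y : Perm α) : Finset α :=
  (x.support ∩ y.support).filter fun p => x p ≠ y p

/-- A permutation supported in `U` is determined by its values on `U \ E`, which it sends
injectively into `U \ x '' E` when it agrees with `x` on `E`. -/
theorem card_filter_support_subset_eqOn_le (x : Perm α) {U E : Finset α} (hEU : E ⊆ U) :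
    #{y : Perm α | y.support ⊆ U ∧ ∀ p ∈ E, y p = x p} ≤ (#U - #E).factorial := by
  set s : Finset (Perm α) := {y : Perm α | y.support ⊆ U ∧ ∀ p ∈ E, y p = x p}
  obtain hs | ⟨y₀, hy₀⟩ := s.eq_empty_or_nonempty
  · simp [hs]
  have mem_s {y : Perm α} : y ∈ s ↔ y.support ⊆ U ∧ ∀ p ∈ E, y p = x p := by simp [s]
  set T := U \ E.image x
  have hT : #T = #(U \ E) := by
    have himage : E.image x ⊆ U := by
      intro q hq
      obtain ⟨p, hp, rfl⟩ := mem_image.mp hq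
      rw [← (mem_s.mp hy₀).2 p hp, isInvariant_of_support_le (mem_s.mp hy₀).1]
      exact hEU hp
    rw [card_sdiff_of_subset himage, card_image_of_injective _ x.injective,
      card_sdiff_of_subset hEU]
  have mapsTo (y : s) (p : ↥(U \ E)) : y.1 p ∈ T := by
    obtain ⟨hyU, hyE⟩ := mem_s.mp y.2
    obtain ⟨hpU, hpE⟩ := mem_sdiff.mp p.2
    refine mem_sdiff.mpr ⟨(isInvariant_of_support_le hyU _).mpr hpU, ?_⟩
    intro h
    obtain ⟨q, hq, hxq⟩ := mem_image.mp h
    rw [← hyE q hq] at hxq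
    exact hpE (y.1.injective hxq ▸ hq)
  let restrict (y : s) : ↥(U \ E) ↪ ↥T :=
    ⟨fun p => ⟨y.1 p, mapsTo y p⟩,
      fun p q h => Subtype.ext (y.1.injective (congrArg Subtype.val h))⟩
  have restrict_injective : Function.Injective restrict := by
    intro y z hyz
    obtain ⟨hyU, hyE⟩ := mem_s.mp y.2
    obtain ⟨hzU, hzE⟩ := mem_s.mp z.2
    refine Subtype.ext (Equiv.ext fun p => ?_)
    by_cases hpE : p ∈ E
    · rw [hyE p hpE, hzE p hpE]
    by_cases hpU : p ∈ U
    · exact congrArg Subtype.val (DFunLike.congr_fun hyz ⟨p, mem_sdiff.mpr ⟨hpU, hpE⟩⟩)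
    · rw [notMem_support.mp fun h => hpU (hyU h), notMem_support.mp fun h => hpU (hzU h)]
  calc #s = Fintype.card s := (Fintype.card_coe s).symm
    _ ≤ Fintype.card (↥(U \ E) ↪ ↥T) :=
      Fintype.card_le_of_injective restrict restrict_injective
    _ = (#U - #E).factorial := by
      rw [Fintype.card_embedding_eq, Fintype.card_coe, Fintype.card_coe, hT,
        Nat.descFactorial_self, card_sdiff_of_subset hEU]

theorem card_filter_supportDisagreement_le (x : Perm α) {j k l : ℕ} (hlk : l ≤ k) (hkj : k ≤ j) :
    #{y : Perm α | #y.support = j ∧ #(x.support ∩ y.support) = k ∧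
        #(supportDisagreement x y) = l} ≤
      (#x.support).choose k * (Fintype.card α - #x.support).choose (j - k) * k.choose l *
        (l + j - k).factorial := by
  set A := x.support
  set s : Finset (Perm α) :=
    {y : Perm α | #y.support = j ∧ #(A ∩ y.support) = k ∧ #(supportDisagreement x y) = l}
  set shapes := (powersetCard k A).sigma fun K => powersetCard l K ×ˢ powersetCard (j - k) Aᶜ
  let shape (y : Perm α) : (_ : Finset α) × (Finset α × Finset α) :=
    ⟨A ∩ y.support, (supportDisagreement x y, y.support \ A)⟩
  have shape_mem : ∀ y ∈ s, shape y ∈ shapes := by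
    intro y hy
    obtain ⟨hj, hk, hl⟩ := (mem_filter.mp hy).2
    have hsplit := card_inter_add_card_sdiff y.support A
    simp only [shapes, shape, mem_sigma, mem_product, mem_powersetCard]
    refine ⟨⟨inter_subset_left, hk⟩, ⟨filter_subset _ _, hl⟩, ?_, ?_⟩
    · exact fun p hp => mem_compl.mpr (mem_sdiff.mp hp).2
    · rw [inter_comm] at hk
      omega
  have card_fiber_le : ∀ c ∈ shapes, #{y ∈ s | shape y = c} ≤ (l + j - k).factorial := by
    rintro ⟨K, D, S⟩ hc
    simp only [shapes, mem_sigma, mem_product, mem_powersetCard] at hc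
    obtain ⟨⟨hKA, hK⟩, ⟨hDK, hD⟩, hSA, hS⟩ := hc
    have hKS : _root_.Disjoint K S :=
      disjoint_left.mpr fun p hpK hpS => mem_compl.mp (hSA hpS) (hKA hpK)
    have hUE : #(K ∪ S) - #(K \ D) = l + j - k := by
      rw [card_union_of_disjoint hKS, card_sdiff_of_subset hDK]
      omega
    calc #{y ∈ s | shape y = ⟨K, (D, S)⟩}
        ≤ #{y : Perm α | y.support ⊆ K ∪ S ∧ ∀ p ∈ K \ D, y p = x p} := by
          refine card_le_card fun y hy => ?_
          simp only [mem_filter, mem_univ, true_and, shape, Sigma.mk.inj_iff, heq_eq_eq,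
            Prod.mk.injEq] at hy ⊢
          obtain ⟨-, rfl, rfl, rfl⟩ := hy
          refine ⟨fun p hp => ?_, fun p hp => ?_⟩
          · by_cases hpA : p ∈ A <;> simp [hp, hpA]
          · obtain ⟨hpK, hpD⟩ := mem_sdiff.mp hp
            simp only [supportDisagreement, mem_filter, not_and, not_not] at hpD
            exact (hpD hpK).symm
      _ ≤ (#(K ∪ S) - #(K \ D)).factorial :=
          card_filter_support_subset_eqOn_le x (subset_union_left.trans' sdiff_subset)
      _ = (l + j - k).factorial := by rw [hUE]
  have card_shapes :
      #shapes = (#A).choose k * (k.choose l * (Fintype.card α - #A).choose (j - k)) := by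
    rw [card_sigma, sum_congr rfl fun K hK => ?_, sum_const, card_powersetCard, smul_eq_mul]
    rw [card_product, card_powersetCard, card_powersetCard, (mem_powersetCard.mp hK).2,
      card_compl]
  calc #s ≤ (l + j - k).factorial * #shapes :=
        card_le_mul_card_image_of_maps_to shape_mem _ card_fiber_le
    _ = _ := by rw [card_shapes]; ring

end Equiv.Perm

open Equiv Perm

lemma permWt_eq_card_support {n : ℕ} (x : Perm (Fin n)) : permWt x = #x.support := rfl

lemma permDist_add_two_mul_card_support_inter {n : ℕ} (x y : Perm (Fin n)) :
    permDist x y + 2 * #(x.support ∩ y.support) =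
      #x.support + #y.support + #(x.supportDisagreement y) := by
  have hsplit : ({p | x p ≠ y p} : Finset (Fin n)) =
      (x.support \ y.support ∪ y.support \ x.support) ∪ x.supportDisagreement y := by
    ext p
    simp only [supportDisagreement, mem_filter, mem_univ, true_and, mem_union, mem_sdiff,
      mem_inter, mem_support]
    grind
  have hsymm : Disjoint (x.support \ y.support) (y.support \ x.support) := disjoint_sdiff_sdiff
  have hrest : Disjoint (x.support \ y.support ∪ y.support \ x.support)
      (x.supportDisagreement y) := by
    refine disjoint_left.mpr fun p hp hpD => ?_
    have := (mem_filter.mp hpD).1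
    simp only [mem_union, mem_sdiff, mem_inter] at hp this
    tauto
  rw [permDist, hsplit, card_union_of_disjoint hrest, card_union_of_disjoint hsymm]
  have hx := card_sdiff_add_card_inter x.support y.support
  have hy := card_sdiff_add_card_inter y.support x.support
  rw [inter_comm] at hy
  omega

theorem stmt3_general (n d i j : ℕ) (hd : 0 < d)
    (x : Equiv.Perm (Fin n)) (hx : permWt x = i) :
    (Finset.univ.filter fun y : Equiv.Perm (Fin n) =>
        permWt y = j ∧ permDist x y ≤ d - 1).card ≤ L n d i j := by
  set ranges := (Icc ((i + j + 1 - d + 1) / 2) (min i j)).sigma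
    fun k => range (min (d + 2 * k - i - j - 1) k + 1)
  let sizes (y : Perm (Fin n)) : (_ : ℕ) × ℕ :=
    ⟨#(x.support ∩ y.support), #(x.supportDisagreement y)⟩
  rw [permWt_eq_card_support] at hx
  have sizes_mem : ∀ y ∈ ({y | permWt y = j ∧ permDist x y ≤ d - 1} : Finset (Perm (Fin n))),
      sizes y ∈ ranges := by
    intro y hy
    obtain ⟨hyj, hdist⟩ := (mem_filter.mp hy).2
    have hsum := permDist_add_two_mul_card_support_inter x y
    have hKA := card_le_card (inter_subset_left : x.support ∩ y.support ⊆ x.support)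
    have hKB := card_le_card (inter_subset_right : x.support ∩ y.support ⊆ y.support)
    have hDK := card_le_card (filter_subset (fun p => x p ≠ y p) (x.support ∩ y.support))
    rw [permWt_eq_card_support] at hyj
    simp only [ranges, sizes, supportDisagreement, mem_sigma, mem_Icc, mem_range] at hsum ⊢
    omega
  rw [L, sum_sigma', card_eq_sum_card_fiberwise sizes_mem]
  refine sum_le_sum fun ⟨k, l⟩ hkl => ?_
  simp only [ranges, mem_sigma, mem_Icc, mem_range] at hkl
  calc _ ≤ #{y : Perm (Fin n) | #y.support = j ∧ #(x.support ∩ y.support) = k ∧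
          #(x.supportDisagreement y) = l} := by
        refine card_le_card fun y hy => ?_
        simp only [mem_filter, mem_univ, true_and, sizes, Sigma.mk.inj_iff, heq_eq_eq] at hy ⊢
        exact ⟨hy.1.1, hy.2.1, hy.2.2⟩
    _ ≤ _ := x.card_filter_supportDisagreement_le (by omega) (by omega)
    _ = _ := by rw [hx, Fintype.card_fin]

theorem stmt3 (n d i j : ℕ) (hn : 0 < n) (hd : 0 < d) (hdn : d ≤ n) (hj : 0 < j)
    (x : Equiv.Perm (Fin n)) (hx : permWt x = i) :
    (Finset.univ.filter fun y : Equiv.Perm (Fin n) =>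
        permWt y = j ∧ permDist x y ≤ d - 1).card ≤ L n d i j :=
  stmt3_general n d i j hd x hx
end

section
/- Let n and d be positive integers with d ≤ n. Then T ≤ (1/2)·Σ_{i=2}^{d−1} Σ_{j=2}^{d−1} C(n,i)·D_i·L_{i,j}. -/
open Finset

/-! Sort the ordered pairs `(x, y)` by the weights `i = |supp x|`, `j = |supp y|`; no permutation
has weight one, so `2 ≤ i, j ≤ d - 1`, and there are `C(n,i)·D_i` permutations of weight `i`.
For fixed `x`, a permutation `y` is determined by `K = supp x ∩ supp y` (`k` points),
`supp y \ supp x` (`j - k` points), the set `D ⊆ K` where `x` and `y` disagree (`l` points), and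
its values on `D ∪ (supp y \ supp x)`: on `K \ D` it agrees with `x`, elsewhere it is the identity.
This leaves at most `C(i,k)·C(n-i,j-k)·C(k,l)·(l+j-k)!` choices. Since `x` and `y` disagree on
at least `(i-k) + (j-k) + l` points, a distance below `d` forces `k` and `l` into the ranges of
`L_{i,j}`. -/

namespace Equiv.Perm

open scoped Nat

variable {α : Type*} [Fintype α] [DecidableEq α]

theorem card_filter_forall_notMem_apply_eq (s : Finset α) (y₀ : Perm α) :
    #{y : Perm α | ∀ p ∉ s, y p = y₀ p} = (#s)! := by
  rw [← Fintype.card_subtype]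
  calc Fintype.card {y : Perm α // ∀ p ∉ s, y p = y₀ p}
      = Fintype.card {f : Perm α // ∀ p, p ∉ s → f p = p} :=
        Fintype.card_congr <| (Equiv.mulLeft y₀⁻¹).subtypeEquiv fun y => by
          simp [Perm.inv_def, Equiv.symm_apply_eq]
    _ = Fintype.card (Perm s) := (Fintype.card_congr (Perm.subtypeEquivSubtypePerm (· ∈ s))).symm
    _ = (#s)! := by rw [Fintype.card_perm, Fintype.card_coe]

theorem card_le_factorial_of_forall_notMem_apply_eq {F : Finset (Perm α)} {s : Finset α}
    (hF : ∀ y ∈ F, ∀ z ∈ F, ∀ p ∉ s, y p = z p) : #F ≤ (#s)! := by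
  obtain rfl | ⟨y₀, hy₀⟩ := F.eq_empty_or_nonempty
  · simp
  calc #F ≤ #{y : Perm α | ∀ p ∉ s, y p = y₀ p} :=
        card_le_card fun y hy => by simpa using hF y hy y₀ hy₀
    _ = (#s)! := card_filter_forall_notMem_apply_eq s y₀

theorem card_filter_support_eq (s : Finset α) :
    #{x : Perm α | x.support = s} = numDerangements #s := by
  rw [← Fintype.card_subtype, ← Fintype.card_coe s, ← card_derangements_eq_numDerangements]
  refine Fintype.card_congr ((derangements.subtypeEquiv (· ∈ s)).trans
    (Equiv.subtypeEquivRight fun f => ?_)).symm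
  simp only [Finset.ext_iff, mem_support, Function.mem_fixedPoints, Function.IsFixedPt]
  exact forall_congr' fun a => by tauto

theorem card_filter_card_support_eq (i : ℕ) :
    #{x : Perm α | #x.support = i} = (Fintype.card α).choose i * numDerangements i := by
  calc #{x : Perm α | #x.support = i}
      = ∑ s ∈ univ.powersetCard i, #{x ∈ {x : Perm α | #x.support = i} | x.support = s} :=
        card_eq_sum_card_fiberwise fun x hx =>
          mem_powersetCard.2 ⟨subset_univ _, (mem_filter.1 hx).2⟩
    _ = ∑ s ∈ univ.powersetCard i, numDerangements i := by
        refine sum_congr rfl fun s hs => ?_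
        rw [filter_filter, ← (mem_powersetCard.1 hs).2, ← card_filter_support_eq]
        congr 1
        exact filter_congr fun x _ => and_iff_right_of_imp fun h => h ▸ rfl
    _ = (Fintype.card α).choose i * numDerangements i := by simp

theorem card_sdiff_add_card_sdiff_add_card_filter_ne_le_hammingDist (x y : Perm α) :
    #(x.support \ y.support) + #(y.support \ x.support) +
      #{p ∈ x.support ∩ y.support | x p ≠ y p} ≤ hammingDist ⇑x ⇑y := by
  rw [← card_union_of_disjoint disjoint_sdiff_sdiff, ← card_union_of_disjoint]
  · refine card_le_card fun p hp => ?_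
    simp only [mem_union, mem_sdiff, mem_filter, mem_inter, mem_support, mem_univ, true_and] at hp ⊢
    grind
  · simp only [disjoint_left, mem_union, mem_sdiff, mem_filter, mem_inter]
    tauto

theorem apply_eq_ite_of_notMem (x y : Perm α) {p : α}
    (hD : p ∉ {q ∈ x.support ∩ y.support | x q ≠ y q}) (hB : p ∉ y.support \ x.support) :
    y p = if p ∈ x.support ∩ y.support then x p else p := by
  simp only [mem_filter, mem_inter, mem_sdiff, mem_support] at hD hB ⊢
  split_ifs <;> grind

theorem card_filter_support_inter_le (x : Perm α) {j k : ℕ} (hkj : k ≤ j) (l : ℕ) :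
    #{y : Perm α | #y.support = j ∧ #(x.support ∩ y.support) = k ∧
        #{p ∈ x.support ∩ y.support | x p ≠ y p} = l} ≤
      (#x.support).choose k * (Fintype.card α - #x.support).choose (j - k) * k.choose l *
        (l + j - k)! := by
  set A := x.support
  set Y : Finset (Perm α) := {y | #y.support = j ∧ #(A ∩ y.support) = k ∧
    #{p ∈ A ∩ y.support | x p ≠ y p} = l}
  have hsupp : ∀ y ∈ Y, (A ∩ y.support, y.support \ A) ∈
      A.powersetCard k ×ˢ Aᶜ.powersetCard (j - k) := by
    intro y hy
    obtain ⟨hj, hk, -⟩ := (mem_filter.1 hy).2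
    simp only [mem_product, mem_powersetCard, inter_subset_left, true_and, hk]
    exact ⟨fun p hp => mem_compl.2 (mem_sdiff.1 hp).2, by rw [card_sdiff, hj, hk]⟩
  have hfiber : ∀ KB ∈ A.powersetCard k ×ˢ Aᶜ.powersetCard (j - k),
      #{y ∈ Y | (A ∩ y.support, y.support \ A) = KB} ≤ k.choose l * (l + j - k)! := by
    rintro ⟨K, B⟩ hKB
    obtain ⟨⟨hKA, hK⟩, hBA, hB⟩ := by simpa only [mem_product, mem_powersetCard] using hKB
    set F := {y ∈ Y | (A ∩ y.support, y.support \ A) = (K, B)}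
    have hdisagree : ∀ y ∈ F, {p ∈ A ∩ y.support | x p ≠ y p} ∈ K.powersetCard l := by
      intro y hy
      obtain ⟨hy, hKB⟩ := mem_filter.1 hy
      have hKy : A ∩ y.support = K := (Prod.ext_iff.1 hKB).1
      exact mem_powersetCard.2 ⟨hKy ▸ filter_subset _ _, (mem_filter.1 hy).2.2.2⟩
    have hD : ∀ D ∈ K.powersetCard l, #{y ∈ F | {p ∈ A ∩ y.support | x p ≠ y p} = D} ≤
        (l + j - k)! := by
      intro D hD
      obtain ⟨hDK, hD⟩ := mem_powersetCard.1 hD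
      have hcard : #(D ∪ B) = l + j - k := by
        rw [card_union_of_disjoint (disjoint_of_subset_left (hDK.trans hKA)
          (subset_compl_iff_disjoint_left.1 hBA)), hD, hB]
        omega
      rw [← hcard]
      refine card_le_factorial_of_forall_notMem_apply_eq fun y hy z hz p hp => ?_
      simp only [F, Y, mem_filter, Prod.ext_iff] at hy hz
      rw [mem_union, not_or] at hp
      rw [apply_eq_ite_of_notMem x y (hy.2 ▸ hp.1) (hy.1.2.2 ▸ hp.2),
        apply_eq_ite_of_notMem x z (hz.2 ▸ hp.1) (hz.1.2.2 ▸ hp.2), hy.1.2.1, hz.1.2.1]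
    simpa [hK, mul_comm] using card_le_mul_card_image_of_maps_to hdisagree _ hD
  calc #Y ≤ _ := card_le_mul_card_image_of_maps_to hsupp _ hfiber
    _ = _ := by rw [card_product, card_powersetCard, card_powersetCard, card_compl]; ring

theorem card_filter_hammingDist_lt_le (x : Perm α) (d j : ℕ) :
    #{y : Perm α | #y.support = j ∧ hammingDist ⇑x ⇑y < d} ≤
      L (Fintype.card α) d #x.support j := by
  set i := #x.support
  set Y : Finset (Perm α) := {y | #y.support = j ∧ hammingDist ⇑x ⇑y < d}
  set Ykl : ℕ → ℕ → Finset (Perm α) := fun k l => {y | #y.support = j ∧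
    #(x.support ∩ y.support) = k ∧ #{p ∈ x.support ∩ y.support | x p ≠ y p} = l}
  have hcover : Y ⊆ (Icc ((i + j + 1 - d + 1) / 2) (min i j)).biUnion fun k =>
      (range (min (d + 2 * k - i - j - 1) k + 1)).biUnion fun l => Ykl k l := by
    intro y hy
    obtain ⟨hj, hd⟩ := (mem_filter.1 hy).2
    have hdist := card_sdiff_add_card_sdiff_add_card_filter_ne_le_hammingDist x y
    have hki := card_le_card (inter_subset_left (s₁ := x.support) (s₂ := y.support))
    have hkj := card_le_card (inter_subset_right (s₁ := x.support) (s₂ := y.support))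
    have hlk := card_le_card (filter_subset (fun p => x p ≠ y p) (x.support ∩ y.support))
    rw [card_sdiff, card_sdiff, inter_comm] at hdist
    simp only [mem_biUnion, mem_Icc, mem_range, Ykl, mem_filter, mem_univ, true_and]
    exact ⟨_, ⟨by omega, by omega⟩, _, by omega, hj, rfl, rfl⟩
  calc #Y ≤ ∑ k ∈ Icc ((i + j + 1 - d + 1) / 2) (min i j),
        ∑ l ∈ range (min (d + 2 * k - i - j - 1) k + 1), #(Ykl k l) :=
        (card_le_card hcover).trans <| card_biUnion_le.trans <|
          sum_le_sum fun k _ => card_biUnion_le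
    _ ≤ L (Fintype.card α) d i j :=
        sum_le_sum fun k hk => sum_le_sum fun l _ =>
          card_filter_support_inter_le x (le_min_iff.1 (mem_Icc.1 hk).2).2 l

theorem card_filter_pairs_le (d i j : ℕ) :
    #{q : Perm α × Perm α | #q.1.support = i ∧ #q.2.support = j ∧ hammingDist ⇑q.1 ⇑q.2 < d} ≤
      (Fintype.card α).choose i * numDerangements i * L (Fintype.card α) d i j := by
  rw [← card_filter_card_support_eq, mul_comm]
  refine card_le_mul_card_image_of_maps_to (f := Prod.fst)
    (fun q hq => mem_filter.2 ⟨mem_univ _, (mem_filter.1 hq).2.1⟩) _ fun x hx => ?_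
  calc _ ≤ #{y : Perm α | #y.support = j ∧ hammingDist ⇑x ⇑y < d} := by
        refine card_le_card_of_injOn Prod.snd (fun q hq => ?_) fun q hq r hr h =>
          Prod.ext ((mem_filter.1 hq).2.trans (mem_filter.1 hr).2.symm) h
        obtain ⟨hqS, rfl⟩ := mem_filter.1 hq
        exact mem_filter.2 ⟨mem_univ _, (mem_filter.1 hqS).2.2⟩
    _ ≤ _ := (mem_filter.1 hx).2 ▸ card_filter_hammingDist_lt_le x d j

end Equiv.Perm

theorem stmt4_general (n d : ℕ) :
    (Tperm n d : ℝ) ≤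
      (1 / 2) * ∑ i ∈ Finset.Icc 2 (d - 1), ∑ j ∈ Finset.Icc 2 (d - 1),
        (Nat.choose n i : ℝ) * (numDerangements i : ℝ) * (L n d i j : ℝ) := by
  set P : Finset (Equiv.Perm (Fin n) × Equiv.Perm (Fin n)) := {q | q.1 ≠ q.2 ∧ 1 ≤ permWt q.1 ∧
    permWt q.1 ≤ d - 1 ∧ 1 ≤ permWt q.2 ∧ permWt q.2 ≤ d - 1 ∧ permDist q.1 q.2 ≤ d - 1}
  set Q : ℕ × ℕ → Finset (Equiv.Perm (Fin n) × Equiv.Perm (Fin n)) := fun ij =>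
    {q | permWt q.1 = ij.1 ∧ permWt q.2 = ij.2 ∧ permDist q.1 q.2 < d}
  have hcover : P ⊆ (Icc 2 (d - 1) ×ˢ Icc 2 (d - 1)).biUnion Q := by
    intro q hq
    obtain ⟨-, h₁, h₁', h₂, h₂', hd⟩ := (mem_filter.1 hq).2
    have hwt₁ : permWt q.1 ≠ 1 := q.1.card_support_ne_one
    have hwt₂ : permWt q.2 ≠ 1 := q.2.card_support_ne_one
    simp only [mem_biUnion, mem_product, mem_Icc, Q, mem_filter, mem_univ, true_and]
    exact ⟨(permWt q.1, permWt q.2), ⟨⟨by omega, h₁'⟩, by omega, h₂'⟩, rfl, rfl, by omega⟩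
  have hP : #P ≤ ∑ i ∈ Icc 2 (d - 1), ∑ j ∈ Icc 2 (d - 1),
      n.choose i * numDerangements i * L n d i j := by
    rw [← sum_product']
    refine (card_le_card hcover).trans <| card_biUnion_le.trans <| sum_le_sum fun ij _ => ?_
    have := Equiv.Perm.card_filter_pairs_le (α := Fin n) d ij.1 ij.2
    rw [Fintype.card_fin] at this
    exact this
  calc (Tperm n d : ℝ) ≤ (#P : ℝ) / 2 := Nat.cast_div_le
    _ ≤ _ := by
      rw [div_eq_inv_mul, one_div]
      gcongr
      exact_mod_cast hP

theorem stmt4 (n d : ℕ) (hn : 0 < n) (hd : 0 < d) (hdn : d ≤ n) :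
    (Tperm n d : ℝ) ≤
      (1 / 2) * ∑ i ∈ Finset.Icc 2 (d - 1), ∑ j ∈ Finset.Icc 2 (d - 1),
        (Nat.choose n i : ℝ) * (numDerangements i : ℝ) * (L n d i j : ℝ) :=
  stmt4_general n d
end

section
/- Let n and d be positive integers with d ≤ n. Then T ≤ (T′ + D′)·D_{d−1}², where D′ = V₂(n,d−1) − 1. -/
open Finset

/-!
Send a permutation to its support, viewed as a binary vector. This map preserves weight and
does not increase Hamming distance, and the permutations with a given support `u` are exactly
the derangements of `u`, so each fibre has `D_{|u|} ≤ D_{d-1}` elements (`D` is monotone away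
from `0`). Hence an ordered pair counted by `T` goes either to an ordered pair counted by `T′`
or, when both permutations have the same support, to one of the `D′` nonzero vectors of weight
at most `d - 1`; each of these targets has at most `D_{d-1}²` preimages.
-/

open Equiv

def suppVec {α : Type*} [DecidableEq α] (σ : Perm α) : α → Bool :=
  fun i => decide (σ i ≠ i)

theorem card_filter_suppVec_eq {α : Type*} [Fintype α] [DecidableEq α] (u : α → Bool) :
    #{σ : Perm α | suppVec σ = u} = numDerangements #{i | u i = true} := by
  calc #{σ : Perm α | suppVec σ = u}
      = Fintype.card {σ : Perm α // ∀ a, ¬u a = true ↔ a ∈ Function.fixedPoints σ} := by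
        rw [← Fintype.card_subtype]
        refine Fintype.card_congr (subtypeEquivRight fun σ => ?_)
        simp only [funext_iff, suppVec, Function.mem_fixedPoints, Function.IsFixedPt]
        refine forall_congr' fun a => ?_
        cases u a <;> simp
    _ = Fintype.card (derangements {i // u i = true}) :=
        (Fintype.card_congr (derangements.subtypeEquiv _)).symm
    _ = numDerangements #{i | u i = true} := by
        rw [card_derangements_eq_numDerangements, Fintype.card_subtype]

theorem numDerangements_le_of_le {a b : ℕ} (ha : 1 ≤ a) (hab : a ≤ b) :
    numDerangements a ≤ numDerangements b := by
  obtain ⟨a, rfl⟩ := Nat.exists_eq_add_of_le' ha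
  obtain ⟨b, rfl⟩ := Nat.exists_eq_add_of_le' (ha.trans hab)
  refine monotone_nat_of_le_succ (f := fun k => numDerangements (k + 1)) (fun k => ?_) (by omega)
  rw [numDerangements_add_two]
  nlinarith

theorem even_card_of_swap_mem {α : Type*} [DecidableEq α] {C : Finset (α × α)}
    (hswap : ∀ p ∈ C, p.swap ∈ C) (hdiag : ∀ p ∈ C, p.1 ≠ p.2) : Even #C := by
  let f : Function.End C := fun p => ⟨p.1.swap, hswap _ p.2⟩
  have hf : f ^ 2 ^ 1 = 1 := rfl
  have hfix : Fintype.card (Function.fixedPoints f) = 0 := by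
    refine Fintype.card_eq_zero_iff.mpr ⟨fun ⟨p, hp⟩ => hdiag p p.2 ?_⟩
    exact (congrArg (·.1.1) hp).symm
  have hmod := Perm.card_fixedPoints_modEq hf
  rw [hfix, Fintype.card_coe] at hmod
  exact Nat.even_iff.mpr hmod

section Hamming

variable {n : ℕ}

theorem binWt_suppVec (σ : Perm (Fin n)) : binWt (suppVec σ) = permWt σ := by
  simp [binWt, permWt, suppVec]

theorem binDist_suppVec_le (σ τ : Perm (Fin n)) :
    binDist (suppVec σ) (suppVec τ) ≤ permDist σ τ := by
  unfold binDist permDist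
  refine card_le_card fun i hi => ?_
  rw [mem_filter] at hi ⊢
  exact ⟨mem_univ i, fun h => hi.2 (by simp only [suppVec, h])⟩

theorem binWt_pos_iff {u : Fin n → Bool} : 0 < binWt u ↔ u ≠ fun _ => false := by
  simp [binWt, Finset.card_pos, Finset.filter_nonempty_iff, funext_iff]

theorem card_filter_binWt_le (r : ℕ) : #{u : Fin n → Bool | binWt u ≤ r} = V2 n r := by
  have hcard : #{u : Fin n → Bool | binWt u ≤ r} = #{s : Finset (Fin n) | #s ≤ r} := by
    refine card_nbij' (fun u => ({i | u i = true} : Finset (Fin n))) (fun s i => decide (i ∈ s))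
      (fun u hu => by simpa [binWt] using hu) (fun s hs => by simpa [binWt] using hs)
      (fun u _ => funext fun i => by simp) (fun s _ => by ext i; simp)
  rw [hcard, card_eq_sum_card_fiberwise (f := card) (t := range (r + 1)) fun s hs => by
    simpa [Nat.lt_succ_iff] using hs, V2]
  refine sum_congr rfl fun i hi => ?_
  have hfiber : ({s | #s ≤ r ∧ #s = i} : Finset (Finset (Fin n))) =
      ({s | #s = i} : Finset (Finset (Fin n))) :=
    filter_congr fun s _ => ⟨And.right, fun h => ⟨by simp only [mem_range] at hi; omega, h⟩⟩
  rw [filter_filter, hfiber, univ_filter_card_eq, card_powersetCard, card_univ, Fintype.card_fin]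

variable (n) in
def nonzeroBinBall (r : ℕ) : Finset (Fin n → Bool) :=
  {u | u ≠ (fun _ => false) ∧ binWt u ≤ r}

theorem card_nonzeroBinBall (r : ℕ) : #(nonzeroBinBall n r) = V2 n r - 1 := by
  rw [← card_filter_binWt_le, ← card_erase_of_mem (a := fun _ => false) (by simp [binWt])]
  congr 1
  ext u
  simp [nonzeroBinBall, and_comm]


theorem card_filter_suppVec_le {u : Fin n → Bool} {r : ℕ} (hu : u ∈ nonzeroBinBall n r) :
    #{σ : Perm (Fin n) | suppVec σ = u} ≤ numDerangements r := by
  simp only [nonzeroBinBall, mem_filter, mem_univ, true_and] at hu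
  have hwt : #{i | u i = true} = binWt u := by simp [binWt]
  rw [card_filter_suppVec_eq, hwt]
  exact numDerangements_le_of_le (binWt_pos_iff.mpr hu.1) hu.2

variable (n) in
def permPairs (r : ℕ) : Finset (Perm (Fin n) × Perm (Fin n)) :=
  {p | p.1 ≠ p.2 ∧ 1 ≤ permWt p.1 ∧ permWt p.1 ≤ r ∧
    1 ≤ permWt p.2 ∧ permWt p.2 ≤ r ∧ permDist p.1 p.2 ≤ r}

variable (n) in
def binPairs (r : ℕ) : Finset ((Fin n → Bool) × (Fin n → Bool)) :=
  {p | p.1 ≠ p.2 ∧ p.1 ≠ (fun _ => false) ∧ p.2 ≠ (fun _ => false) ∧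
    binWt p.1 ≤ r ∧ binWt p.2 ≤ r ∧ binDist p.1 p.2 ≤ r}

theorem Tperm_eq_card_permPairs_div_two (d : ℕ) : Tperm n d = #(permPairs n (d - 1)) / 2 := rfl

theorem Tbin_eq_card_binPairs_div_two (d : ℕ) : Tbin n d = #(binPairs n (d - 1)) / 2 := rfl

theorem even_card_binPairs (r : ℕ) : Even #(binPairs n r) := by
  refine even_card_of_swap_mem (fun p hp => ?_) (fun p hp => (mem_filter.mp hp).2.1)
  simp only [binPairs, mem_filter, mem_univ, true_and, Prod.fst_swap, Prod.snd_swap] at hp ⊢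
  obtain ⟨hne, h1, h2, hw1, hw2, hdist⟩ := hp
  refine ⟨hne.symm, h2, h1, hw2, hw1, ?_⟩
  simpa only [binDist, ne_comm] using hdist

theorem mem_nonzeroBinBall_of_mem_binPairs {r : ℕ} {q : (Fin n → Bool) × (Fin n → Bool)}
    (hq : q ∈ binPairs n r) : q.1 ∈ nonzeroBinBall n r ∧ q.2 ∈ nonzeroBinBall n r := by
  simp only [binPairs, nonzeroBinBall, mem_filter, mem_univ, true_and] at hq ⊢
  exact ⟨⟨hq.2.1, hq.2.2.2.1⟩, hq.2.2.1, hq.2.2.2.2.1⟩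

theorem suppVec_mem_nonzeroBinBall {σ : Perm (Fin n)} {r : ℕ} (h1 : 1 ≤ permWt σ)
    (hr : permWt σ ≤ r) : suppVec σ ∈ nonzeroBinBall n r := by
  rw [← binWt_suppVec] at h1 hr
  simpa [nonzeroBinBall, hr] using binWt_pos_iff.mp h1

theorem suppVec_pair_mem {r : ℕ} {p : Perm (Fin n) × Perm (Fin n)} (hp : p ∈ permPairs n r) :
    (suppVec p.1, suppVec p.2) ∈
      binPairs n r ∪ (nonzeroBinBall n r).image fun u => (u, u) := by
  simp only [permPairs, mem_filter, mem_univ, true_and] at hp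
  obtain ⟨-, h1, hw1, h2, hw2, hdist⟩ := hp
  have hu := suppVec_mem_nonzeroBinBall h1 hw1
  have hv := suppVec_mem_nonzeroBinBall h2 hw2
  by_cases hsame : suppVec p.1 = suppVec p.2
  · exact mem_union_right _ (mem_image.mpr ⟨suppVec p.1, hu, Prod.ext rfl hsame⟩)
  · simp only [nonzeroBinBall, mem_filter, mem_univ, true_and] at hu hv
    refine mem_union_left _ ?_
    simp only [binPairs, mem_filter, mem_univ, true_and]
    exact ⟨hsame, hu.1, hv.1, hu.2, hv.2, (binDist_suppVec_le _ _).trans hdist⟩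

theorem card_filter_suppVec_pair_le {r : ℕ} {u v : Fin n → Bool} (hu : u ∈ nonzeroBinBall n r)
    (hv : v ∈ nonzeroBinBall n r) :
    #{p : Perm (Fin n) × Perm (Fin n) | (suppVec p.1, suppVec p.2) = (u, v)} ≤
      numDerangements r ^ 2 := by
  calc #{p : Perm (Fin n) × Perm (Fin n) | (suppVec p.1, suppVec p.2) = (u, v)}
      = #(univ.filter (suppVec · = u) ×ˢ univ.filter (suppVec · = v)) := by
        congr 1
        ext p
        simp
    _ ≤ numDerangements r * numDerangements r := by
        rw [card_product]
        exact Nat.mul_le_mul (card_filter_suppVec_le hu) (card_filter_suppVec_le hv)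
    _ = numDerangements r ^ 2 := (sq _).symm

theorem card_permPairs_le (r : ℕ) :
    #(permPairs n r) ≤ numDerangements r ^ 2 * (#(binPairs n r) + (V2 n r - 1)) := by
  set t := binPairs n r ∪ (nonzeroBinBall n r).image fun u => (u, u)
  have hfiber : ∀ q ∈ t,
      #{p ∈ permPairs n r | (suppVec p.1, suppVec p.2) = q} ≤ numDerangements r ^ 2 := by
    rintro ⟨u, v⟩ hq
    refine (card_le_card (filter_subset_filter _ (subset_univ _))).trans ?_
    rcases mem_union.mp hq with hq | hq
    · exact card_filter_suppVec_pair_le (mem_nonzeroBinBall_of_mem_binPairs hq).1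
        (mem_nonzeroBinBall_of_mem_binPairs hq).2
    · obtain ⟨w, hw, hwuv⟩ := mem_image.mp hq
      obtain ⟨rfl, rfl⟩ := Prod.ext_iff.mp hwuv
      exact card_filter_suppVec_pair_le hw hw
  calc #(permPairs n r) ≤ numDerangements r ^ 2 * #t :=
        card_le_mul_card_image_of_maps_to (fun p hp => suppVec_pair_mem hp) _ hfiber
    _ ≤ numDerangements r ^ 2 * (#(binPairs n r) + (V2 n r - 1)) := by
        gcongr
        calc #t ≤ #(binPairs n r) + #((nonzeroBinBall n r).image fun u => (u, u)) :=
              card_union_le _ _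
          _ ≤ #(binPairs n r) + (V2 n r - 1) := by
              rw [← card_nonzeroBinBall]
              gcongr
              exact card_image_le

end Hamming

theorem stmt5_general (n d : ℕ) :
    Tperm n d ≤ (Tbin n d + (V2 n (d - 1) - 1)) * numDerangements (d - 1) ^ 2 := by
  have hbin : #(binPairs n (d - 1)) = 2 * Tbin n d := by
    obtain ⟨m, hm⟩ := even_card_binPairs (n := n) (d - 1)
    rw [Tbin_eq_card_binPairs_div_two, hm]
    omega
  rw [Tperm_eq_card_permPairs_div_two]
  refine Nat.div_le_of_le_mul ?_
  calc #(permPairs n (d - 1))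
      ≤ numDerangements (d - 1) ^ 2 * (2 * Tbin n d + (V2 n (d - 1) - 1)) :=
        hbin ▸ card_permPairs_le (d - 1)
    _ ≤ 2 * ((Tbin n d + (V2 n (d - 1) - 1)) * numDerangements (d - 1) ^ 2) := by nlinarith

theorem stmt5 (n d : ℕ) (hn : 0 < n) (hd : 0 < d) (hdn : d ≤ n) :
    Tperm n d ≤ (Tbin n d + (V2 n (d - 1) - 1)) * numDerangements (d - 1) ^ 2 :=
  stmt5_general n d
end

section
/- Let α be a constant with 0 < α < 1. Then there exists a positive constant ε such that for all positive integers n and d with (d : ℝ) = n^α, one has T′ ≤ (D′)^{2−ε}, where D′ = V₂(n,d−1) − 1. -/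
open Finset

/-!
Write `D = d - 1`, so that `D′ = V₂(n,D) - 1 ≥ C(n,D) ≥ (n/D)^D`. Since
`2 |supp u ∪ supp v| = wt u + wt v + dist(u,v)`, every pair counted by `T′` has joint support of
size at most `m = ⌊3D/2⌋`, whence `T′ ≤ V₂(n,m) · 4^m ≤ (4e · n/D)^m`. As soon as
`n/D ≥ (4e)^6` this is at most `(n/D)^(7D/4) ≤ D′^(2-ε)`, and `n/D ≥ n/d = n^(1-α)` is large once
`n` is. For small `n` the trivial bound `T′ ≤ D′²/2` suffices, because then `D′^ε ≤ 2^(nε) ≤ 2`.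
-/

section Counting

variable (α : Type*) [Fintype α]

lemma card_filter_card_le_eq_V2 (m : ℕ) :
    #{S : Finset α | #S ≤ m} = V2 (Fintype.card α) m := by
  rw [card_eq_sum_card_fiberwise (f := Finset.card) (t := range (m + 1))
    (fun S hS => mem_range.2 (Nat.lt_succ_of_le (mem_filter.1 hS).2))]
  refine sum_congr rfl fun i hi => ?_
  rw [filter_filter, ← Fintype.card_finset_len, Fintype.card_subtype]
  congr 1
  exact filter_congr fun S _ => and_iff_right_of_imp fun h => h ▸ Nat.lt_succ_iff.1 (mem_range.1 hi)

lemma card_filter_card_union_le [DecidableEq α] (m : ℕ) :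
    #{p : Finset α × Finset α | #(p.1 ∪ p.2) ≤ m} ≤ V2 (Fintype.card α) m * 4 ^ m := by
  have hsub : ({p | #(p.1 ∪ p.2) ≤ m} : Finset (Finset α × Finset α)) ⊆
      ({S : Finset α | #S ≤ m} : Finset (Finset α)).biUnion fun S => S.powerset ×ˢ S.powerset := by
    intro p hp
    simp only [mem_filter, mem_univ, true_and] at hp
    exact mem_biUnion.2 ⟨p.1 ∪ p.2, by simpa using hp,
      mem_product.2 ⟨mem_powerset.2 subset_union_left, mem_powerset.2 subset_union_right⟩⟩
  calc _ ≤ _ := card_le_card hsub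
    _ ≤ ∑ S ∈ {S : Finset α | #S ≤ m}, #(S.powerset ×ˢ S.powerset) := card_biUnion_le
    _ ≤ ∑ S ∈ {S : Finset α | #S ≤ m}, 4 ^ m := sum_le_sum fun S hS => by
      rw [card_product, card_powerset, ← mul_pow]
      exact Nat.pow_le_pow_right (by norm_num) (mem_filter.1 hS).2
    _ = V2 (Fintype.card α) m * 4 ^ m := by rw [sum_const, card_filter_card_le_eq_V2, smul_eq_mul]

end Counting

lemma V2_le_two_pow (n r : ℕ) : V2 n r ≤ 2 ^ n := by
  simpa [card_filter_card_le_eq_V2] using card_le_univ (α := Finset (Fin n)) {S | #S ≤ r}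

lemma V2_zero_right (n : ℕ) : V2 n 0 = 1 := by simp [V2]

lemma choose_add_one_le_V2 {n r : ℕ} (hr : r ≠ 0) : n.choose r + 1 ≤ V2 n r := by
  simpa [V2, add_comm] using add_le_sum (s := range (r + 1)) (f := n.choose)
    (fun _ _ => Nat.zero_le _) (mem_range.2 (Nat.lt_succ_self r)) (mem_range.2 (Nat.succ_pos r)) hr

section Support

variable {n : ℕ}

def binSupp (u : Fin n → Bool) : Finset (Fin n) := {i | u i ≠ false}

lemma card_binSupp (u : Fin n → Bool) : #(binSupp u) = binWt u := rfl

lemma binSupp_injective : Function.Injective (binSupp (n := n)) := by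
  intro u v h
  funext i
  have := congrArg (i ∈ ·) h
  simp only [binSupp, mem_filter, mem_univ, true_and, ne_eq, Bool.not_eq_false, eq_iff_iff] at this
  cases hu : u i <;> cases hv : v i <;> simp_all

lemma binSupp_eq_empty {u : Fin n → Bool} : binSupp u = ∅ ↔ u = fun _ => false := by
  rw [← binSupp_injective.eq_iff]
  simp [binSupp]

lemma two_mul_card_binSupp_union (u v : Fin n → Bool) :
    2 * #(binSupp u ∪ binSupp v) = binWt u + binWt v + binDist u v := by
  simp only [binSupp, binWt, binDist, ← filter_or, card_filter, mul_sum, ← sum_add_distrib]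
  refine sum_congr rfl fun i _ => ?_
  cases u i <;> cases v i <;> rfl

end Support

lemma card_nonzero_binWt_le (n r : ℕ) :
    #{u : Fin n → Bool | u ≠ (fun _ => false) ∧ binWt u ≤ r} ≤ V2 n r - 1 := by
  have hempty : (∅ : Finset (Fin n)) ∈ ({S | #S ≤ r} : Finset (Finset (Fin n))) := by simp
  rw [← Fintype.card_fin n, ← card_filter_card_le_eq_V2, Fintype.card_fin,
    ← card_erase_of_mem hempty]
  refine card_le_card_of_injOn (binSupp (n := n)) (fun u hu => ?_) binSupp_injective.injOn
  simp only [coe_filter, mem_univ, true_and] at hu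
  simpa [mem_erase, binSupp_eq_empty, card_binSupp] using hu.symm

lemma two_mul_Tbin_le_sq (n d : ℕ) : 2 * Tbin n d ≤ (V2 n (d - 1) - 1) ^ 2 := by
  set B : Finset (Fin n → Bool) := {u | u ≠ (fun _ => false) ∧ binWt u ≤ d - 1}
  calc 2 * Tbin n d ≤ #(B ×ˢ B) := by
        refine (Nat.mul_div_le _ 2).trans (card_le_card fun p hp => ?_)
        simp only [mem_filter, mem_univ, true_and, mem_product, B] at hp ⊢
        tauto
    _ ≤ (V2 n (d - 1) - 1) ^ 2 := by
      rw [card_product, sq]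
      exact Nat.mul_le_mul (card_nonzero_binWt_le n _) (card_nonzero_binWt_le n _)

lemma Tbin_le_V2_mul_four_pow (n d : ℕ) :
    Tbin n d ≤ V2 n (3 * (d - 1) / 2) * 4 ^ (3 * (d - 1) / 2) := by
  calc Tbin n d ≤ #{p : Finset (Fin n) × Finset (Fin n) | #(p.1 ∪ p.2) ≤ 3 * (d - 1) / 2} := by
        refine (Nat.div_le_self _ 2).trans (card_le_card_of_injOn (Prod.map binSupp binSupp)
          (fun p hp => ?_) (binSupp_injective.prodMap binSupp_injective).injOn)
        obtain ⟨-, -, -, h₁, h₂, h₁₂⟩ := (mem_filter.1 hp).2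
        have := two_mul_card_binSupp_union p.1 p.2
        exact mem_filter.2 ⟨mem_univ _, by dsimp; omega⟩
    _ ≤ _ := by simpa using card_filter_card_union_le (Fin n) (3 * (d - 1) / 2)

lemma div_pow_le_choose {n k : ℕ} (h : k ≤ n) : ((n : ℝ) / k) ^ k ≤ n.choose k := by
  induction k generalizing n with
  | zero => simp
  | succ k ih =>
    obtain ⟨m, rfl⟩ : ∃ m, n = m + 1 := ⟨n - 1, by omega⟩
    have hkm : k ≤ m := by omega
    have hratio : (((m + 1 : ℕ) : ℝ) / (k + 1 : ℕ)) ^ k ≤ ((m : ℝ) / k) ^ k := by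
      rcases Nat.eq_zero_or_pos k with rfl | hk
      · simp
      have : (k : ℝ) ≤ m := by exact_mod_cast hkm
      refine pow_le_pow_left₀ (by positivity) ?_ k
      rw [div_le_div_iff₀ (by positivity) (by positivity)]
      push_cast
      nlinarith
    have hchoose : ((m + 1).choose (k + 1) : ℝ) = m.choose k * ((m + 1 : ℕ) / (k + 1 : ℕ)) := by
      rw [mul_div_assoc', eq_div_iff (by positivity), mul_comm (m.choose k : ℝ)]
      exact_mod_cast (Nat.add_one_mul_choose_eq m k).symm
    rw [pow_succ, hchoose]
    gcongr
    exact hratio.trans (ih hkm)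

lemma V2_le_exp_mul_div_pow {n m : ℕ} (hm : 0 < m) (hmn : m ≤ n) :
    (V2 n m : ℝ) ≤ (Real.exp 1 * n / m) ^ m := by
  have hnm : 1 ≤ (n : ℝ) / m := by
    rw [one_le_div (by positivity)]
    exact_mod_cast hmn
  calc (V2 n m : ℝ) = ∑ i ∈ range (m + 1), (n.choose i : ℝ) := by simp [V2]
    _ ≤ ∑ i ∈ range (m + 1), ((n : ℝ) / m) ^ m * ((m : ℝ) ^ i / i.factorial) := by
      refine sum_le_sum fun i hi => ?_
      calc (n.choose i : ℝ) ≤ (n : ℝ) ^ i / i.factorial := Nat.choose_le_pow_div i n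
        _ = ((n : ℝ) / m) ^ i * ((m : ℝ) ^ i / i.factorial) := by
          rw [mul_div_assoc', div_pow, div_mul_cancel₀ _ (by positivity)]
        _ ≤ ((n : ℝ) / m) ^ m * ((m : ℝ) ^ i / i.factorial) := by
          gcongr
          exact Nat.lt_succ_iff.1 (mem_range.1 hi)
    _ ≤ ((n : ℝ) / m) ^ m * Real.exp m := by
      rw [← mul_sum]
      gcongr
      exact Real.sum_le_exp_of_nonneg (by positivity) _
    _ = (Real.exp 1 * n / m) ^ m := by rw [← Real.exp_one_pow, mul_div_assoc, mul_pow, mul_comm]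

lemma mul_pow_le_rpow {c x : ℝ} (hc : 0 ≤ c) (hcx : c ^ 6 ≤ x) (m : ℕ) :
    (c * x) ^ m ≤ x ^ (7 / 6 * (m : ℝ)) := by
  have hx : 0 ≤ x := (pow_nonneg hc 6).trans hcx
  have hcx' : c ≤ x ^ (6⁻¹ : ℝ) := by
    rwa [Real.le_rpow_inv_iff_of_pos hc hx (by norm_num), Real.rpow_ofNat]
  calc (c * x) ^ m ≤ (x ^ (6⁻¹ : ℝ) * x ^ (1 : ℝ)) ^ m := by rw [Real.rpow_one]; gcongr
    _ = x ^ (7 / 6 * (m : ℝ)) := by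
      rw [← Real.rpow_add' hx (by norm_num), Real.rpow_mul_natCast hx]
      norm_num

lemma half_sq_le_rpow_of_rpow_le_two {x ε : ℝ} (hx : 0 ≤ x) (h : x ^ ε ≤ 2) :
    x ^ 2 / 2 ≤ x ^ (2 - ε) := by
  calc x ^ 2 / 2 = x ^ (2 - ε) * x ^ ε / 2 := by
        rw [← Real.rpow_add' hx (by norm_num), sub_add_cancel, Real.rpow_two]
    _ ≤ x ^ (2 - ε) * 2 / 2 := by gcongr
    _ = x ^ (2 - ε) := by ring

lemma le_div_rpow_of_rpow_inv_le {α b x : ℝ} (hα : α < 1) (hb : 0 ≤ b) (hx : 0 < x)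
    (h : b ^ (1 - α)⁻¹ ≤ x) : b ≤ x / x ^ α :=
  calc b = (b ^ (1 - α)⁻¹) ^ (1 - α) := (Real.rpow_inv_rpow hb (by linarith)).symm
    _ ≤ x ^ (1 - α) := Real.rpow_le_rpow (by positivity) h (by linarith)
    _ = x / x ^ α := by rw [Real.rpow_sub hx, Real.rpow_one]

lemma Tbin_le_rpow {n D : ℕ} {ε : ℝ} (hD : 1 ≤ D) (hε : ε ≤ 1 / 4)
    (hnD : (4 * Real.exp 1) ^ 6 ≤ (n : ℝ) / D) :
    (Tbin n (D + 1) : ℝ) ≤ ((V2 n D - 1 : ℕ) : ℝ) ^ (2 - ε) := by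
  set x : ℝ := n / D
  set m := 3 * D / 2
  have hD0 : (0 : ℝ) < D := by exact_mod_cast hD
  have hc : 2 ≤ 4 * Real.exp 1 := by linarith [Real.add_one_le_exp 1]
  have hx : 2 ≤ x := hc.trans ((le_self_pow₀ (by linarith) (by norm_num)).trans hnD)
  have hn : (n : ℝ) = x * D := (div_mul_cancel₀ _ hD0.ne').symm
  have hDm : D ≤ m := by omega
  have hm : (2 * m : ℝ) ≤ 3 * D := by exact_mod_cast (by omega : 2 * m ≤ 3 * D)
  have hmn : m ≤ n := by exact_mod_cast (show (m : ℝ) ≤ n by nlinarith)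
  have hDn : D ≤ n := hDm.trans hmn
  have hchoose : x ^ D ≤ ((V2 n D - 1 : ℕ) : ℝ) := (div_pow_le_choose hDn).trans <| by
    exact_mod_cast (by have := choose_add_one_le_V2 (n := n) (by omega : D ≠ 0); omega)
  calc (Tbin n (D + 1) : ℝ) ≤ V2 n m * 4 ^ m := by
        exact_mod_cast (Nat.add_sub_cancel D 1).symm ▸ Tbin_le_V2_mul_four_pow n (D + 1)
    _ ≤ (Real.exp 1 * n / m) ^ m * 4 ^ m := by
        gcongr
        exact V2_le_exp_mul_div_pow (by omega) hmn
    _ = (4 * Real.exp 1 * (n / m)) ^ m := by rw [← mul_pow]; ring_nf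
    _ ≤ (4 * Real.exp 1 * x) ^ m := by
        gcongr
        exact div_le_div_of_nonneg_left (by positivity) hD0 (by exact_mod_cast hDm)
    _ ≤ x ^ (7 / 6 * (m : ℝ)) := mul_pow_le_rpow (by positivity) hnD m
    _ ≤ x ^ ((2 - ε) * D) := Real.rpow_le_rpow_of_exponent_le (by linarith) (by nlinarith)
    _ = (x ^ D) ^ (2 - ε) := by rw [mul_comm, Real.rpow_natCast_mul (by positivity)]
    _ ≤ ((V2 n D - 1 : ℕ) : ℝ) ^ (2 - ε) := Real.rpow_le_rpow (by positivity) hchoose (by linarith)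

theorem stmt8_general (α : ℝ) (hα2 : α < 1) :
    ∃ ε : ℝ, 0 < ε ∧ ∀ n d : ℕ, 0 < n → 0 < d → (d : ℝ) = (n : ℝ) ^ α →
      (Tbin n d : ℝ) ≤ ((V2 n (d - 1) - 1 : ℕ) : ℝ) ^ (2 - ε) := by
  set N : ℝ := ((4 * Real.exp 1) ^ 6) ^ (1 - α)⁻¹
  have hN : 1 ≤ N := Real.one_le_rpow
    (one_le_pow₀ (by linarith [Real.add_one_le_exp 1])) (inv_nonneg.2 (by linarith))
  refine ⟨(4 * N)⁻¹, by positivity, fun n d hn hd hdα => ?_⟩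
  set ε : ℝ := (4 * N)⁻¹
  set D' := V2 n (d - 1) - 1
  by_cases hsmall : (D' : ℝ) ^ ε ≤ 2
  · calc (Tbin n d : ℝ) ≤ (D' : ℝ) ^ 2 / 2 := by
          rw [le_div_iff₀ two_pos, mul_comm]
          exact_mod_cast two_mul_Tbin_le_sq n d
      _ ≤ (D' : ℝ) ^ (2 - ε) := half_sq_le_rpow_of_rpow_le_two (Nat.cast_nonneg _) hsmall
  obtain ⟨D, rfl⟩ : ∃ D, d = D + 1 := ⟨d - 1, by omega⟩
  have hD : 1 ≤ D := by
    by_contra! h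
    obtain rfl : D = 0 := by omega
    simp [D', V2_zero_right, Real.zero_rpow (by positivity : ε ≠ 0)] at hsmall
  have hnN : 1 < (n : ℝ) * ε := by
    rw [← Real.rpow_lt_rpow_left_iff one_lt_two, Real.rpow_one, Real.rpow_natCast_mul two_pos.le]
    refine (not_le.1 hsmall).trans_le (Real.rpow_le_rpow (by positivity) ?_ (by positivity))
    exact_mod_cast (Nat.sub_le _ _).trans (V2_le_two_pow n _)
  rw [← div_eq_mul_inv, one_lt_div (by positivity)] at hnN
  refine Tbin_le_rpow hD (by rw [one_div]; exact inv_anti₀ (by norm_num) (by linarith)) ?_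
  calc (4 * Real.exp 1) ^ 6 ≤ (n : ℝ) / (n : ℝ) ^ α :=
        le_div_rpow_of_rpow_inv_le hα2 (by positivity) (by positivity) (by linarith)
    _ ≤ (n : ℝ) / D := by rw [← hdα]; push_cast; gcongr; linarith

theorem stmt8 (α : ℝ) (hα1 : 0 < α) (hα2 : α < 1) :
    ∃ ε : ℝ, 0 < ε ∧ ∀ n d : ℕ, 0 < n → 0 < d → (d : ℝ) = (n : ℝ) ^ α →
      (Tbin n d : ℝ) ≤ ((V2 n (d - 1) - 1 : ℕ) : ℝ) ^ (2 - ε) :=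
  stmt8_general α hα2
end

section
/- Let α be a constant with 0 < α < 1 and let ε > 0. Then (d² + d)/D^ε tends to 0 as n → ∞ along d = n^α; that is, for every η > 0 there exists N such that for all integers n ≥ N and all positive integers d with (d : ℝ) = n^α, one has d² + d ≤ η·D^ε, where D = V(n,d−1) − 1. -/
open Finset

/-!
Since `d = n ^ α → ∞`, for any fixed `k ≥ 2` eventually `k < d`, so `D` contains the term
`C(n,k)·D_k ≥ C(n,k) ≥ n ^ (k - 1)`. Choosing `k` with `(k - 1) ε ≥ 3` gives
`D ^ ε ≥ n ^ 3`, which beats `d² + d ≤ 2 n²` because `d ≤ n`.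
-/

open Filter
open scoped Nat

theorem one_le_numDerangements {k : ℕ} (hk : 2 ≤ k) : 1 ≤ numDerangements k := by
  induction k, hk using Nat.le_induction with
  | base => simp [numDerangements_add_two]
  | succ k hk ih =>
    obtain ⟨j, rfl⟩ := Nat.exists_eq_add_of_le' hk
    rw [numDerangements_add_two]
    nlinarith

theorem choose_mul_numDerangements_add_one_le_V {n k r : ℕ} (hk : 0 < k) (hkr : k ≤ r) :
    n.choose k * numDerangements k + 1 ≤ V n r := by
  have hsub : ({0, k} : Finset ℕ) ⊆ range (r + 1) := by
    simp only [insert_subset_iff, singleton_subset_iff, mem_range]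
    omega
  calc n.choose k * numDerangements k + 1
      = ∑ i ∈ ({0, k} : Finset ℕ), n.choose i * numDerangements i := by
        rw [sum_pair hk.ne, add_comm]
        simp
    _ ≤ V n r := sum_le_sum_of_subset hsub

theorem choose_le_V_sub_one {n k r : ℕ} (hk : 2 ≤ k) (hkr : k ≤ r) :
    n.choose k ≤ V n r - 1 := by
  have hV := choose_mul_numDerangements_add_one_le_V (n := n) (by omega) hkr
  have hD := Nat.le_mul_of_pos_right (n.choose k) (one_le_numDerangements hk)
  omega

/-- Each factor `n - i` of the descending factorial is at least `n / 2`. -/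
theorem pow_le_two_pow_mul_factorial_mul_choose {n k : ℕ} (h : 2 * k ≤ n + 2) :
    n ^ k ≤ 2 ^ k * k ! * n.choose k := by
  calc n ^ k ≤ (2 * (n + 1 - k)) ^ k := Nat.pow_le_pow_left (by omega) k
    _ = 2 ^ k * (n + 1 - k) ^ k := mul_pow _ _ _
    _ ≤ 2 ^ k * n.descFactorial k := Nat.mul_le_mul_left _ (Nat.pow_sub_le_descFactorial n k)
    _ = 2 ^ k * k ! * n.choose k := by rw [Nat.descFactorial_eq_factorial_mul_choose, mul_assoc]

theorem pow_pred_le_V_sub_one {n k r : ℕ} (hk : 2 ≤ k) (hkr : k ≤ r) (hn : 2 ^ k * k ! ≤ n) :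
    n ^ (k - 1) ≤ V n r - 1 := by
  have h2k : 2 * k ≤ n + 2 :=
    calc 2 * k ≤ 2 ^ k := by
          have := Nat.lt_two_pow_self (n := k - 1)
          rw [show k = k - 1 + 1 by omega, pow_succ]
          omega
      _ ≤ 2 ^ k * k ! := Nat.le_mul_of_pos_right _ k.factorial_pos
      _ ≤ n + 2 := by omega
  have hpos : 0 < n := lt_of_lt_of_le (by positivity) hn
  refine Nat.le_of_mul_le_mul_right ?_ hpos
  calc n ^ (k - 1) * n = n ^ k := by rw [← pow_succ, Nat.sub_add_cancel (by omega)]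
    _ ≤ 2 ^ k * k ! * n.choose k := pow_le_two_pow_mul_factorial_mul_choose h2k
    _ ≤ (V n r - 1) * n := by
        rw [mul_comm]
        exact Nat.mul_le_mul (choose_le_V_sub_one hk hkr) hn

theorem Real.rpow_le_rpow_of_pow_le {x y a ε : ℝ} {m : ℕ} (hx : 1 ≤ x) (hxy : x ^ m ≤ y)
    (ha : a ≤ m * ε) (hε : 0 ≤ ε) : x ^ a ≤ y ^ ε :=
  calc x ^ a ≤ x ^ ((m : ℝ) * ε) := Real.rpow_le_rpow_of_exponent_le hx ha
    _ = (x ^ m) ^ ε := by rw [Real.rpow_mul (by positivity), Real.rpow_natCast]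
    _ ≤ y ^ ε := Real.rpow_le_rpow (by positivity) hxy hε

theorem stmt10 (α ε : ℝ) (hα1 : 0 < α) (hα2 : α < 1) (hε : 0 < ε) :
    ∀ η : ℝ, 0 < η → ∃ N : ℕ, ∀ n : ℕ, N ≤ n → ∀ d : ℕ, 0 < d → (d : ℝ) = (n : ℝ) ^ α →
      (d : ℝ) ^ 2 + (d : ℝ) ≤ η * ((V n (d - 1) - 1 : ℕ) : ℝ) ^ ε := by
  intro η hη
  set k := ⌈3 / ε⌉₊ + 2
  have hkε : 3 ≤ ((k - 1 : ℕ) : ℝ) * ε := by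
    rw [← div_le_iff₀ hε, show k - 1 = ⌈3 / ε⌉₊ + 1 by omega]
    exact (Nat.le_ceil _).trans (by push_cast; linarith)
  have hd_large : ∀ᶠ n : ℕ in atTop, (k + 1 : ℝ) ≤ (n : ℝ) ^ α :=
    ((tendsto_rpow_atTop hα1).comp tendsto_natCast_atTop_atTop).eventually_ge_atTop _
  have hη_large : ∀ᶠ n : ℕ in atTop, 2 ≤ η * n :=
    (tendsto_natCast_atTop_atTop.const_mul_atTop hη).eventually_ge_atTop _
  obtain ⟨N, hN⟩ := eventually_atTop.mp
    (hd_large.and (hη_large.and (eventually_ge_atTop (2 ^ k * k ! + 1))))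
  refine ⟨N, fun n hn d _ hdn => ?_⟩
  obtain ⟨hkd, hηn, hkn⟩ := hN n hn
  have hn1 : (1 : ℝ) ≤ n := by exact_mod_cast (by omega : 1 ≤ n)
  have hdn' : (d : ℝ) ≤ n := hdn ▸ Real.rpow_le_self_of_one_le hn1 hα2.le
  have hkd' : k ≤ d - 1 := by
    have : k + 1 ≤ d := by exact_mod_cast hdn ▸ hkd
    omega
  have hD : (n : ℝ) ^ 3 ≤ ((V n (d - 1) - 1 : ℕ) : ℝ) ^ ε := by
    rw [← Real.rpow_natCast]
    refine Real.rpow_le_rpow_of_pow_le hn1 ?_ (by exact_mod_cast hkε) hε.le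
    exact_mod_cast pow_pred_le_V_sub_one (by omega) hkd' (by omega)
  calc (d : ℝ) ^ 2 + d ≤ 2 * n ^ 2 := by nlinarith
    _ ≤ η * n ^ 3 := by nlinarith
    _ ≤ η * ((V n (d - 1) - 1 : ℕ) : ℝ) ^ ε := by gcongr
end

section
/- Let n and d be positive integers with d ≤ n. Then P(n,d)·(V(n,d−1) + P[n,d−1]) ≥ 2·n!. -/
open Finset

/-!
Take a largest `(n,d)` permutation array `C`. By maximality every permutation lies within
distance `d - 1` of some codeword. Count each permutation once for every codeword near it, and
once more if that codeword is unique: this counts every permutation at least twice. The first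
count is at most `|C| · V(n, d-1)`, as a ball of radius `r` has at most `V(n, r)` points. The
permutations whose only nearby codeword is `c` are pairwise within distance `d - 1`, since two
of them at distance `≥ d` could replace `c` in `C`; so the second count is at most
`|C| · P[n, d-1]`.
-/
open Equiv

theorem Equiv.Perm.card_filter_support_eq_s12 {α : Type*} [Fintype α] [DecidableEq α]
    (S : Finset α) :
    #{π : Perm α | π.support = S} = numDerangements #S := by
  have hfix : ∀ π : Perm α, π.support = S ↔ ∀ a, a ∉ S ↔ a ∈ Function.fixedPoints π := by
    intro π
    simp only [Finset.ext_iff, Perm.mem_support, Function.mem_fixedPoints, Function.IsFixedPt]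
    exact forall_congr' fun a => by tauto
  rw [← Fintype.card_coe S, ← card_derangements_eq_numDerangements,
    Fintype.card_congr (derangements.subtypeEquiv (· ∈ S)), Fintype.card_subtype]
  simp only [hfix]

lemma permDist_comm {n : ℕ} (x y : Perm (Fin n)) : permDist x y = permDist y x := by
  simp only [permDist, ne_comm]

lemma permDist_self {n : ℕ} (x : Perm (Fin n)) : permDist x x = 0 := by
  simp [permDist]

lemma permDist_eq_permWt_mul_inv {n : ℕ} (x y : Perm (Fin n)) :
    permDist x y = permWt (x * y⁻¹) := by
  rw [permDist, ← card_map y.toEmbedding, permWt]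
  congr 1
  ext j
  simp [eq_comm]

theorem Equiv.Perm.card_filter_card_support_eq_s12 {α : Type*} [Fintype α] [DecidableEq α]
    (i : ℕ) :
    #{π : Perm α | #π.support = i} = (Fintype.card α).choose i * numDerangements i := by
  rw [card_eq_sum_card_fiberwise (f := Perm.support) (t := powersetCard i univ)
    (fun π hπ => mem_powersetCard.2 ⟨subset_univ _, (mem_filter.1 hπ).2⟩)]
  calc ∑ S ∈ powersetCard i univ, #{π ∈ {π : Perm α | #π.support = i} | π.support = S}
      = ∑ S ∈ powersetCard i (univ : Finset α), numDerangements i := by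
        refine sum_congr rfl fun S hS => ?_
        rw [← (mem_powersetCard.1 hS).2, ← Perm.card_filter_support_eq_s12, filter_filter]
        congr 1
        ext π
        simp only [mem_filter, mem_univ, true_and]
        exact ⟨And.right, fun h => ⟨h ▸ rfl, h⟩⟩
    _ = (Fintype.card α).choose i * numDerangements i := by
        rw [sum_const, card_powersetCard, card_univ, smul_eq_mul]

lemma card_filter_permWt_le {n : ℕ} (r : ℕ) :
    #{π : Perm (Fin n) | permWt π ≤ r} ≤ V n r := by
  rw [card_eq_sum_card_fiberwise (f := permWt) (t := range (r + 1))
    (fun π hπ => mem_range.2 (Nat.lt_succ_of_le (mem_filter.1 hπ).2))]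
  calc ∑ i ∈ range (r + 1), #{π ∈ {π : Perm (Fin n) | permWt π ≤ r} | permWt π = i}
      ≤ ∑ i ∈ range (r + 1), #{π : Perm (Fin n) | #π.support = i} :=
        sum_le_sum fun _ _ => card_le_card fun π hπ =>
          mem_filter.2 ⟨mem_univ _, (mem_filter.1 hπ).2⟩
    _ = V n r := by
        simp only [Perm.card_filter_card_support_eq_s12, Fintype.card_fin, V]

lemma card_filter_permDist_le {n : ℕ} (c : Perm (Fin n)) (r : ℕ) :
    #{σ : Perm (Fin n) | permDist σ c ≤ r} ≤ V n r := by
  calc #{σ : Perm (Fin n) | permDist σ c ≤ r}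
      = #{π : Perm (Fin n) | permWt π ≤ r} :=
        card_equiv (Equiv.mulRight c⁻¹) (by simp [permDist_eq_permWt_mul_inv])
    _ ≤ V n r := card_filter_permWt_le r

theorem two_mul_card_le_of_covering {α : Type*} [Fintype α] [DecidableEq α]
    (close : α → α → Prop) [DecidableRel close] (C : Finset α) (B G : ℕ)
    (hcover : ∀ x, ∃ c ∈ C, close x c)
    (hball : ∀ c ∈ C, #{x | close x c} ≤ B)
    (hprivate : ∀ c ∈ C, #{x | {c' ∈ C | close x c'} = {c}} ≤ G) :
    2 * Fintype.card α ≤ #C * (B + G) := by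
  set single : α → α → Prop := fun x c => {c' ∈ C | close x c'} = {c}
  have hpoint : ∀ x, 2 ≤ #{c ∈ C | close x c} + #{c ∈ C | single x c} := by
    intro x
    obtain ⟨c, hc, hxc⟩ := hcover x
    have hpos : 0 < #{c ∈ C | close x c} := card_pos.2 ⟨c, mem_filter.2 ⟨hc, hxc⟩⟩
    by_cases h : #{c ∈ C | close x c} = 1
    · obtain ⟨c', hc'⟩ := card_eq_one.1 h
      have hc'C : c' ∈ C := (mem_filter.1 (hc' ▸ mem_singleton_self c')).1
      have : 0 < #{c ∈ C | single x c} := card_pos.2 ⟨c', mem_filter.2 ⟨hc'C, hc'⟩⟩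
      omega
    · omega
  calc 2 * Fintype.card α
      = ∑ x : α, 2 := by rw [sum_const, card_univ, smul_eq_mul, mul_comm]
    _ ≤ ∑ x : α, (#(C.bipartiteAbove close x) + #(C.bipartiteAbove single x)) :=
        sum_le_sum fun x _ => hpoint x
    _ = ∑ c ∈ C, #(univ.bipartiteBelow close c)
          + ∑ c ∈ C, #(univ.bipartiteBelow single c) := by
        rw [sum_add_distrib, sum_card_bipartiteAbove_eq_sum_card_bipartiteBelow,
          sum_card_bipartiteAbove_eq_sum_card_bipartiteBelow]
    _ ≤ ∑ c ∈ C, B + ∑ c ∈ C, G := add_le_add (sum_le_sum hball) (sum_le_sum hprivate)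
    _ = #C * (B + G) := by rw [sum_const, sum_const, smul_eq_mul, smul_eq_mul, mul_add]

lemma Finset.bddAbove_card_setOf {α : Type*} [Fintype α] (p : Finset α → Prop) :
    BddAbove {m | ∃ s : Finset α, p s ∧ #s = m} :=
  ⟨Fintype.card α, by rintro m ⟨s, -, rfl⟩; exact card_le_univ s⟩

section PermutationArrays

variable {n d : ℕ} {C : Finset (Perm (Fin n))}

lemma IsPA.card_le_Pmax (hC : IsPA n d C) : #C ≤ Pmax n d :=
  le_csSup (bddAbove_card_setOf _) ⟨C, hC, rfl⟩

lemma card_le_PmaxLe {e : ℕ} {Γ : Finset (Perm (Fin n))}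
    (hΓ : ∀ x ∈ Γ, ∀ y ∈ Γ, x ≠ y → permDist x y ≤ e) : #Γ ≤ PmaxLe n e :=
  le_csSup (bddAbove_card_setOf _) ⟨Γ, hΓ, rfl⟩

lemma exists_isPA_card_eq_Pmax (n d : ℕ) : ∃ C, IsPA n d C ∧ #C = Pmax n d :=
  Nat.sSup_mem (s := {m | ∃ C, IsPA n d C ∧ #C = m}) ⟨0, ∅, by simp [IsPA], rfl⟩
    (bddAbove_card_setOf _)

lemma IsPA.mono {C' : Finset (Perm (Fin n))} (hC : IsPA n d C) (h : C' ⊆ C) : IsPA n d C' :=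
  fun x hx y hy => hC x (h hx) y (h hy)

lemma IsPA.insert_of_forall_le {σ : Perm (Fin n)} (hC : IsPA n d C)
    (hσ : ∀ c ∈ C, d ≤ permDist σ c) : IsPA n d (insert σ C) := by
  intro x hx y hy hxy
  rcases mem_insert.1 hx with hx | hx <;> rcases mem_insert.1 hy with hy | hy
  · exact absurd (hx.trans hy.symm) hxy
  · exact hx ▸ hσ y hy
  · exact hy ▸ permDist_comm σ x ▸ hσ x hx
  · exact hC x hx y hy hxy

lemma IsPA.exists_permDist_le_of_card_eq (hC : IsPA n d C) (hmax : #C = Pmax n d)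
    (σ : Perm (Fin n)) : ∃ c ∈ C, permDist σ c ≤ d - 1 := by
  by_contra! hfar
  have hσ : σ ∉ C := fun hσC => by simpa [permDist_self] using hfar σ hσC
  have hPA : IsPA n d (insert σ C) :=
    hC.insert_of_forall_le fun c hc => by have := hfar c hc; omega
  have := hPA.card_le_Pmax
  rw [card_insert_of_notMem hσ] at this
  omega

lemma not_permDist_le_of_filter_eq_singleton {σ c c' : Perm (Fin n)}
    (h : {c'' ∈ C | permDist σ c'' ≤ d - 1} = {c}) (hc' : c' ∈ C.erase c) :
    ¬ permDist σ c' ≤ d - 1 := fun hle =>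
  ne_of_mem_erase hc' <| mem_singleton.1 <| h ▸ mem_filter.2 ⟨mem_of_mem_erase hc', hle⟩

lemma IsPA.permDist_le_of_card_eq (hC : IsPA n d C) (hmax : #C = Pmax n d)
    {σ τ c : Perm (Fin n)} (hσ : {c' ∈ C | permDist σ c' ≤ d - 1} = {c})
    (hτ : {c' ∈ C | permDist τ c' ≤ d - 1} = {c}) : permDist σ τ ≤ d - 1 := by
  by_contra hστ
  have hcC : c ∈ C := (mem_filter.1 (hσ ▸ mem_singleton_self c)).1
  have hτC : τ ∉ C.erase c := fun h =>
    not_permDist_le_of_filter_eq_singleton hτ h (by simp [permDist_self])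
  have hσC : σ ∉ insert τ (C.erase c) := by
    rw [mem_insert, not_or]
    refine ⟨fun h => hστ (by simp [h, permDist_self]), fun h => ?_⟩
    exact not_permDist_le_of_filter_eq_singleton hσ h (by simp [permDist_self])
  have hPA : IsPA n d (insert σ (insert τ (C.erase c))) := by
    refine ((hC.mono (erase_subset c C)).insert_of_forall_le fun c' hc' => ?_).insert_of_forall_le
      fun c' hc' => ?_
    · have := not_permDist_le_of_filter_eq_singleton hτ hc'; omega
    · rcases mem_insert.1 hc' with rfl | hc'
      · omega
      · have := not_permDist_le_of_filter_eq_singleton hσ hc'; omega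
  have := hPA.card_le_Pmax
  rw [card_insert_of_notMem hσC, card_insert_of_notMem hτC, card_erase_of_mem hcC] at this
  have := card_pos.2 ⟨c, hcC⟩
  omega

end PermutationArrays

theorem stmt12_general (n d : ℕ) :
    Pmax n d * (V n (d - 1) + PmaxLe n (d - 1)) ≥ 2 * Nat.factorial n := by
  obtain ⟨C, hC, hCmax⟩ := exists_isPA_card_eq_Pmax n d
  have h := two_mul_card_le_of_covering (fun σ c => permDist σ c ≤ d - 1) C
    (V n (d - 1)) (PmaxLe n (d - 1)) (hC.exists_permDist_le_of_card_eq hCmax)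
    (fun c _ => card_filter_permDist_le c _)
    (fun _ _ => card_le_PmaxLe fun _ hσ _ hτ _ =>
      hC.permDist_le_of_card_eq hCmax (mem_filter.1 hσ).2 (mem_filter.1 hτ).2)
  rwa [Fintype.card_perm, Fintype.card_fin, hCmax] at h

theorem stmt12 (n d : ℕ) (hn : 0 < n) (hd : 0 < d) (hdn : d ≤ n) :
    Pmax n d * (V n (d - 1) + PmaxLe n (d - 1)) ≥ 2 * Nat.factorial n :=
  stmt12_general n d
end

section
/- Let q be a prime power with q ≥ 7. Then P(q, q−4) ≥ (q+1)·q·(q−1), P(q, q−3) ≥ 2·q·(q−1), P(q−1, q−4) ≥ (q+1)·(q−1), and P(q−1, q−6) ≥ 2·(q+1)·(q−1). -/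
/-!
`GL(2, q)` acting on the projective line `OnePoint F`, a set of `q + 1` points, induces a sharply
3-transitive set of `(q + 1) q (q - 1)` permutations, so any two of them agree in at most two
points. Contracting a permutation `g` at `∞` (composing with the transposition `(g ∞, ∞)` and
deleting `∞`) changes at most one further value, so contracted distances drop by at most three;
contracting once more at `0` gives permutations of `q - 1` points. Keeping only the permutations
whose values at `∞` and `0` are suitably pinned down makes the contractions change fewer values,
at the cost of fewer permutations; this gives the remaining bounds.
-/

open Finset

open Equiv

section DistOn
variable {α β : Type*} [DecidableEq β]

def distOn (s : Finset α) (f g : α → β) : ℕ := #{a ∈ s | f a ≠ g a}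

lemma distOn_comm (s : Finset α) (f g : α → β) : distOn s f g = distOn s g f := by
  simp_rw [distOn, ne_comm]

lemma distOn_triangle (s : Finset α) (f g h : α → β) :
    distOn s f h ≤ distOn s f g + distOn s g h := by
  classical
  refine (card_le_card fun a ha => ?_).trans (card_union_le _ _)
  simp only [mem_filter, mem_union] at ha ⊢
  by_cases hfg : f a = g a
  · exact .inr ⟨ha.1, hfg ▸ ha.2⟩
  · exact .inl ⟨ha.1, hfg⟩

lemma distOn_add_distOn_compl [Fintype α] [DecidableEq α] (s : Finset α) (f g : α → β) :
    distOn s f g + distOn sᶜ f g = distOn univ f g := by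
  rw [distOn, distOn, ← card_union_of_disjoint (disjoint_filter_filter disjoint_compl_right),
    ← filter_union, union_compl, distOn]

/-- On `Tᶜ`, `g'` and `h'` can only agree where `g` and `h` agree or where one of them was
modified. -/
lemma card_le_distOn_compl_add [Fintype α] [DecidableEq α] {g h g' h' : α → β} (T : Finset α)
    (hgh : Fintype.card α ≤ distOn univ g h + 2) :
    Fintype.card α ≤ distOn Tᶜ g' h' + distOn T g h + distOn Tᶜ g g' + distOn Tᶜ h h' + 2 := by
  have hsplit := distOn_add_distOn_compl T g h
  have h₁ := distOn_triangle Tᶜ g g' h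
  have h₂ := distOn_triangle Tᶜ g' h' h
  rw [distOn_comm Tᶜ h' h] at h₂
  omega

variable {s : Finset α} {f g : α → β}

lemma distOn_le_card : distOn s f g ≤ #s := card_filter_le _ _

lemma distOn_le_card_sub_one {a : α} (ha : a ∈ s) (hfg : f a = g a) :
    distOn s f g ≤ #s - 1 := by
  classical
  rw [← card_erase_of_mem ha]
  exact card_le_card fun b hb => by
    simp only [mem_filter] at hb
    exact mem_erase.2 ⟨fun hba => hb.2 (hba ▸ hfg), hb.1⟩

end DistOn

section Contraction
variable {α : Type*} [DecidableEq α]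

def contract (x : α) (g : Perm α) : Perm α := swap (g x) x * g

variable {x z : α} {g : Perm α}

@[simp] lemma contract_apply_self (x : α) (g : Perm α) : contract x g x = x := by
  simp [contract]

lemma contract_apply_of_ne {y : α} (hy : y ≠ x) (hgy : g y ≠ x) : contract x g y = g y :=
  swap_apply_of_ne_of_ne (g.injective.ne hy) hgy

lemma contract_of_apply_self (h : g x = x) : contract x g = g := by
  simp [contract, h, Perm.one_def]

lemma contract_apply_of_swap (hzx : g z = x) (hxz : g x = z) : contract x g z = z := by
  simp [contract, hzx, hxz]

lemma contract_contract_apply_of_ne (hxz : x ≠ z) : contract z (contract x g) x = x := by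
  rw [contract_apply_of_ne hxz (by rwa [contract_apply_self]), contract_apply_self]

lemma contract_contract_apply_of_mem_pair (hxz : x ≠ z) {t : α} (ht : t ∈ ({x, z} : Finset α)) :
    contract z (contract x g) t = t := by
  rcases mem_insert.1 ht with rfl | ht
  · exact contract_contract_apply_of_ne hxz
  · rw [mem_singleton.1 ht, contract_apply_self]

lemma filter_ne_contract_subset {s : Finset α} (hx : x ∉ s) :
    {a ∈ s | g a ≠ contract x g a} ⊆ {g.symm x} := by
  intro a ha
  simp only [mem_filter] at ha
  by_contra hne
  refine ha.2 (contract_apply_of_ne (by rintro rfl; exact hx ha.1) fun hga => hne ?_).symm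
  simp [← hga]

lemma distOn_contract_le_one {s : Finset α} (hx : x ∉ s) : distOn s g (contract x g) ≤ 1 :=
  (card_le_card (filter_ne_contract_subset hx)).trans_eq (card_singleton _)

lemma distOn_contract_eq_zero {s : Finset α} (hx : x ∉ s) (hgx : g.symm x ∉ s) :
    distOn s g (contract x g) = 0 := by
  refine card_eq_zero.2 (eq_empty_of_forall_notMem fun a ha => hgx ?_)
  rw [← mem_singleton.1 (filter_ne_contract_subset hx ha)]
  exact (mem_filter.1 ha).1

variable [Fintype α] {h : Perm α}

lemma distOn_contract_contract_le_two : distOn {x, z}ᶜ g (contract z (contract x g)) ≤ 2 :=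
  (distOn_triangle _ _ (contract x g) _).trans <|
    add_le_add (distOn_contract_le_one (by simp)) (distOn_contract_le_one (by simp))

lemma distOn_contract_contract_le_one (hg : g x = x ∨ g z = x) :
    distOn {x, z}ᶜ g (contract z (contract x g)) ≤ 1 := by
  have hgx : g.symm x ∉ ({x, z}ᶜ : Finset α) := by
    rcases hg with hg | hg <;> simp [Equiv.symm_apply_eq, hg]
  refine (distOn_triangle _ _ (contract x g) _).trans ?_
  rw [distOn_contract_eq_zero (by simp) hgx, zero_add]
  exact distOn_contract_le_one (by simp)

lemma distOn_contract_contract_eq_zero (hzx : g z = x) (hxz : g x = z) :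
    distOn {x, z}ᶜ g (contract z (contract x g)) = 0 := by
  have hgx : g.symm x ∉ ({x, z}ᶜ : Finset α) := by simp [Equiv.symm_apply_eq, hzx]
  have hgz : (contract x g).symm z ∉ ({x, z}ᶜ : Finset α) := by
    simp [Equiv.symm_apply_eq, contract_apply_of_swap hzx hxz]
  refine Nat.eq_zero_of_le_zero ((distOn_triangle _ _ (contract x g) _).trans ?_)
  rw [distOn_contract_eq_zero (by simp) hgx, distOn_contract_eq_zero (by simp) hgz]

variable (hgh : Fintype.card α ≤ distOn univ g h + 2)
include hgh

lemma card_le_distOn_contract_add_five :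
    Fintype.card α ≤ distOn {x}ᶜ (contract x g) (contract x h) + 5 := by
  have := card_le_distOn_compl_add {x} hgh (g' := contract x g) (h' := contract x h)
  have hT : distOn {x} g h ≤ 1 := distOn_le_card
  have hg := distOn_contract_le_one (x := x) (g := g) (s := {x}ᶜ) (by simp)
  have hh := distOn_contract_le_one (x := x) (g := h) (s := {x}ᶜ) (by simp)
  omega

lemma card_le_distOn_contract_add_four (hg : g x = x ∨ g x = z) (hh : h x = x ∨ h x = z) :
    Fintype.card α ≤ distOn {x}ᶜ (contract x g) (contract x h) + 4 := by
  have := card_le_distOn_compl_add {x} hgh (g' := contract x g) (h' := contract x h)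
  have hg₁ := distOn_contract_le_one (x := x) (g := g) (s := {x}ᶜ) (by simp)
  have hh₁ := distOn_contract_le_one (x := x) (g := h) (s := {x}ᶜ) (by simp)
  by_cases hx : g x = h x
  · have hT := distOn_le_card_sub_one (mem_singleton_self x) hx
    rw [card_singleton] at hT
    omega
  · have hT : distOn {x} g h ≤ 1 := distOn_le_card
    have : distOn {x}ᶜ g (contract x g) = 0 ∨ distOn {x}ᶜ h (contract x h) = 0 := by
      rcases hg with hg | hg
      · simp [contract_of_apply_self hg, distOn]
      rcases hh with hh | hh
      · simp [contract_of_apply_self hh, distOn]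
      · exact absurd (hg.trans hh.symm) hx
    omega

lemma card_le_distOn_contract_contract_add_five (hg : g x = x ∨ g z = x ∧ g x = z)
    (hh : h x = x ∨ h z = x ∧ h x = z) :
    Fintype.card α ≤
      distOn {x, z}ᶜ (contract z (contract x g)) (contract z (contract x h)) + 5 := by
  have := card_le_distOn_compl_add {x, z} hgh
    (g' := contract z (contract x g)) (h' := contract z (contract x h))
  have hT₂ : #{x, z} ≤ 2 := card_le_two
  have hg₁ := distOn_contract_contract_le_one (hg.imp_right And.left)
  have hh₁ := distOn_contract_contract_le_one (hh.imp_right And.left)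
  by_cases hx : g x = h x
  · have hT := distOn_le_card_sub_one (mem_insert_self x {z}) hx
    omega
  · have hT : distOn {x, z} g h ≤ #{x, z} := distOn_le_card
    have : distOn {x, z}ᶜ g (contract z (contract x g)) = 0 ∨
        distOn {x, z}ᶜ h (contract z (contract x h)) = 0 := by
      rcases hg with hg | hg
      · rcases hh with hh | hh
        · exact absurd (hg.trans hh.symm) hx
        · exact .inr (distOn_contract_contract_eq_zero hh.1 hh.2)
      · exact .inl (distOn_contract_contract_eq_zero hg.1 hg.2)
    omega

lemma card_le_distOn_contract_contract_add_seven (hg : g x = z ∨ g x = x ∨ g z = x)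
    (hh : h x = z ∨ h x = x ∨ h z = x) :
    Fintype.card α ≤
      distOn {x, z}ᶜ (contract z (contract x g)) (contract z (contract x h)) + 7 := by
  have := card_le_distOn_compl_add {x, z} hgh
    (g' := contract z (contract x g)) (h' := contract z (contract x h))
  have hT₂ : #{x, z} ≤ 2 := card_le_two
  have hg₂ := distOn_contract_contract_le_two (x := x) (z := z) (g := g)
  have hh₂ := distOn_contract_contract_le_two (x := x) (z := z) (g := h)
  by_cases hxz : g x = h x ∨ g z = h z
  · have hT : distOn {x, z} g h ≤ #{x, z} - 1 := by
      rcases hxz with hxz | hxz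
      · exact distOn_le_card_sub_one (mem_insert_self x {z}) hxz
      · exact distOn_le_card_sub_one (mem_insert_of_mem (mem_singleton_self z)) hxz
    omega
  · have hT : distOn {x, z} g h ≤ #{x, z} := distOn_le_card
    have : distOn {x, z}ᶜ g (contract z (contract x g)) ≤ 1 ∨
        distOn {x, z}ᶜ h (contract z (contract x h)) ≤ 1 := by
      rcases hg with hg | hg
      · rcases hh with hh | hh
        · exact absurd (hg.trans hh.symm) (not_or.1 hxz).1
        · exact .inr (distOn_contract_contract_le_one hh)
      · exact .inl (distOn_contract_contract_le_one hg)
    omega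

end Contraction

section SharplyThreeTransitive
variable {α : Type*}

def IsSharplyThreeTransitive (M : Finset (Perm α)) : Prop :=
  ∀ ⦃x y z u v w : α⦄, x ≠ y → x ≠ z → y ≠ z → u ≠ v → u ≠ w → v ≠ w →
    ∃! g ∈ M, g x = u ∧ g y = v ∧ g z = w

namespace IsSharplyThreeTransitive
variable {M : Finset (Perm α)} (hM : IsSharplyThreeTransitive M)
include hM

lemma eq_of_apply_eq {g h : Perm α} (hg : g ∈ M) (hh : h ∈ M) {x y z : α} (hxy : x ≠ y)
    (hxz : x ≠ z) (hyz : y ≠ z) (ex : g x = h x) (ey : g y = h y) (ez : g z = h z) : g = h :=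
  (hM hxy hxz hyz (g.injective.ne hxy) (g.injective.ne hxz) (g.injective.ne hyz)).unique
    ⟨hg, rfl, rfl, rfl⟩ ⟨hh, ex.symm, ey.symm, ez.symm⟩

variable [Fintype α] [DecidableEq α]

lemma card_le_distOn_add_two {g h : Perm α} (hg : g ∈ M) (hh : h ∈ M) (hne : g ≠ h) :
    Fintype.card α ≤ distOn univ g h + 2 := by
  have hsplit := card_filter_add_card_filter_not (s := univ) (fun a => g a = h a)
  have hagree : #{a | g a = h a} ≤ 2 := by
    by_contra! h3
    obtain ⟨x, hx, y, hy, z, hz, hxy, hxz, hyz⟩ := two_lt_card.1 h3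
    simp only [mem_filter] at hx hy hz
    exact hne (hM.eq_of_apply_eq hg hh hxy hxz hyz hx.2 hy.2 hz.2)
  rw [card_univ] at hsplit
  simp only [distOn, ne_eq]
  omega

variable {p₀ p₁ p₂ : α} (h₀₁ : p₀ ≠ p₁) (h₀₂ : p₀ ≠ p₂) (h₁₂ : p₁ ≠ p₂)
include h₀₁ h₀₂ h₁₂

lemma card_filter_apply_eq_and_apply_eq {c₀ c₂ : α} (hc : c₀ ≠ c₂) :
    #{g ∈ M | g p₀ = c₀ ∧ g p₂ = c₂} = Fintype.card α - 2 := by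
  rw [← card_pair hc, ← card_compl]
  refine card_bij (fun g _ => g p₁) (fun g hg => ?_) (fun g hg h hh hgh => ?_) fun v hv => ?_
  · simp only [mem_filter] at hg
    simp [← hg.2.1, ← hg.2.2, h₀₁.symm, h₁₂]
  · simp only [mem_filter] at hg hh
    exact hM.eq_of_apply_eq hg.1 hh.1 h₀₁ h₀₂ h₁₂ (hg.2.1.trans hh.2.1.symm) hgh
      (hg.2.2.trans hh.2.2.symm)
  · simp only [mem_compl, mem_insert, mem_singleton, not_or] at hv
    obtain ⟨g, ⟨hg, h₀, h₁, h₂⟩, -⟩ := hM h₀₁ h₀₂ h₁₂ (Ne.symm hv.1) hc hv.2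
    exact ⟨g, by simp [hg, h₀, h₂], h₁⟩

lemma card_filter_apply_eq (c : α) :
    #{g ∈ M | g p₂ = c} = (Fintype.card α - 1) * (Fintype.card α - 2) := by
  rw [card_eq_sum_card_fiberwise (s := {g ∈ M | g p₂ = c}) (f := fun g => g p₀) (t := {c}ᶜ)
    fun g hg => by simpa [← (mem_filter.1 hg).2] using h₀₂]
  rw [sum_congr rfl fun c₀ hc₀ => ?_, sum_const, card_compl, card_singleton, smul_eq_mul]
  rw [filter_filter, ← hM.card_filter_apply_eq_and_apply_eq h₀₁ h₀₂ h₁₂ (by simpa using hc₀)]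
  simp_rw [and_comm]

lemma card_filter_apply_mem (A : Finset α) :
    #{g ∈ M | g p₂ ∈ A} = #A * ((Fintype.card α - 1) * (Fintype.card α - 2)) := by
  rw [card_eq_sum_card_fiberwise (s := {g ∈ M | g p₂ ∈ A}) (f := fun g => g p₂) (t := A)
    fun g hg => (mem_filter.1 hg).2]
  rw [sum_congr rfl fun c hc => ?_, sum_const, smul_eq_mul]
  rw [filter_filter, ← hM.card_filter_apply_eq h₀₁ h₀₂ h₁₂ c]
  congr 1
  exact filter_congr fun g _ => ⟨And.right, fun h => ⟨h ▸ hc, h⟩⟩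

lemma card_filter_apply_eq_and_mem {B : Finset α} (hB : p₂ ∉ B) :
    #{g ∈ M | g p₀ = p₂ ∧ g p₂ ∈ B} = #B * (Fintype.card α - 2) := by
  rw [card_eq_sum_card_fiberwise (s := {g ∈ M | g p₀ = p₂ ∧ g p₂ ∈ B}) (f := fun g => g p₂)
    (t := B) fun g hg => (mem_filter.1 hg).2.2]
  rw [sum_congr rfl fun c hc => ?_, sum_const, smul_eq_mul]
  rw [filter_filter,
    ← hM.card_filter_apply_eq_and_apply_eq h₀₁ h₀₂ h₁₂ (ne_of_mem_of_not_mem hc hB).symm]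
  congr 1
  exact filter_congr fun g _ => ⟨fun h => ⟨h.1.1, h.2⟩, fun h => ⟨⟨h.1, h.2 ▸ hc⟩, h.2⟩⟩

lemma card_filter_mem_or {A B : Finset α} (hAB : Disjoint A B) (hB : p₂ ∉ B) :
    #{g ∈ M | g p₂ ∈ A ∨ g p₀ = p₂ ∧ g p₂ ∈ B} =
      #A * ((Fintype.card α - 1) * (Fintype.card α - 2)) + #B * (Fintype.card α - 2) := by
  rw [filter_or, card_union_of_disjoint, hM.card_filter_apply_mem h₀₁ h₀₂ h₁₂,
    hM.card_filter_apply_eq_and_mem h₀₁ h₀₂ h₁₂ hB]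
  exact disjoint_filter.2 fun g _ hA hB => disjoint_left.1 hAB hA hB.2

end IsSharplyThreeTransitive

end SharplyThreeTransitive

section PermutationArrays
variable {α : Type*} [Fintype α] [DecidableEq α]

lemma le_Pmax {n d : ℕ} {C : Finset (Perm (Fin n))} (hC : IsPA n d C) : #C ≤ Pmax n d :=
  le_csSup ⟨Fintype.card (Perm (Fin n)), by rintro m ⟨D, -, rfl⟩; exact card_le_univ D⟩ ⟨C, hC, rfl⟩

lemma apply_mem_compl_iff {T : Finset α} {g : Perm α} (hg : ∀ t ∈ T, g t = t) (a : α) :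
    g a ∈ Tᶜ ↔ a ∈ Tᶜ := by
  simp only [mem_compl, not_iff_not]
  refine ⟨fun ha => ?_, fun ha => by rwa [hg a ha]⟩
  rwa [g.injective (hg _ ha)] at ha

lemma permDist_permCongr_subtypePerm (T : Finset α) {g h : Perm α} (hg : ∀ t ∈ T, g t = t)
    (hh : ∀ t ∈ T, h t = t) :
    permDist (Tᶜ.equivFin.permCongr (g.subtypePerm (apply_mem_compl_iff hg)))
      (Tᶜ.equivFin.permCongr (h.subtypePerm (apply_mem_compl_iff hh))) = distOn Tᶜ g h := by
  refine card_bij (fun i _ => (Tᶜ.equivFin.symm i : α)) (fun i hi => ?_)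
    (fun i _ j _ hij => Tᶜ.equivFin.symm.injective (Subtype.ext hij)) fun a ha => ?_
  · simp only [mem_filter, mem_univ, true_and, permCongr_apply, ne_eq,
      EmbeddingLike.apply_eq_iff_eq, Subtype.ext_iff, Perm.subtypePerm_apply] at hi
    exact mem_filter.2 ⟨(Tᶜ.equivFin.symm i).2, hi⟩
  · simp only [mem_filter] at ha
    refine ⟨Tᶜ.equivFin ⟨a, ha.1⟩, ?_, by simp⟩
    simpa [Subtype.ext_iff] using ha.2

lemma card_le_Pmax_of_le_distOn {ι : Type*} (T : Finset α) {s : Finset ι} (φ : ι → Perm α)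
    (hφ : ∀ i, ∀ t ∈ T, φ i t = t) {d : ℕ} (hd : 0 < d)
    (hs : ∀ i ∈ s, ∀ j ∈ s, i ≠ j → d ≤ distOn Tᶜ (φ i) (φ j)) : #s ≤ Pmax #Tᶜ d := by
  set ψ : ι → Perm (Fin #Tᶜ) := fun i =>
    Tᶜ.equivFin.permCongr ((φ i).subtypePerm (apply_mem_compl_iff (hφ i)))
  have hψ (i j : ι) : permDist (ψ i) (ψ j) = distOn Tᶜ (φ i) (φ j) :=
    permDist_permCongr_subtypePerm T (hφ i) (hφ j)
  have hinj : Set.InjOn ψ s := fun i hi j hj hij => by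
    by_contra hne
    have := hs i hi j hj hne
    rw [← hψ, hij, permDist] at this
    simp at this
    omega
  rw [← card_image_of_injOn hinj]
  refine le_Pmax fun x hx y hy hxy => ?_
  obtain ⟨i, hi, rfl⟩ := mem_image.1 hx
  obtain ⟨j, hj, rfl⟩ := mem_image.1 hy
  exact hψ i j ▸ hs i hi j hj fun hij => hxy (hij ▸ rfl)

end PermutationArrays

namespace IsSharplyThreeTransitive
variable {α : Type*} [Fintype α] [DecidableEq α] {M : Finset (Perm α)}
  (hM : IsSharplyThreeTransitive M) {q : ℕ} (hq : Fintype.card α = q + 1)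
  {p₀ p₁ p₂ : α} (h₀₁ : p₀ ≠ p₁) (h₀₂ : p₀ ≠ p₂) (h₁₂ : p₁ ≠ p₂)
include hM hq h₀₁ h₀₂ h₁₂

lemma le_Pmax_sub_four (hq5 : 5 ≤ q) : Pmax q (q - 4) ≥ (q + 1) * q * (q - 1) := by
  have hcard : #({p₂}ᶜ : Finset α) = q := by simp [card_compl, hq]
  have hM' : #M = (q + 1) * q * (q - 1) := by
    have := hM.card_filter_apply_mem h₀₁ h₀₂ h₁₂ univ
    rw [filter_true_of_mem fun _ _ => mem_univ _, card_univ, hq] at this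
    rw [this, mul_assoc]
    rfl
  calc (q + 1) * q * (q - 1) = #M := hM'.symm
    _ ≤ Pmax #({p₂}ᶜ : Finset α) (q - 4) := by
      refine card_le_Pmax_of_le_distOn {p₂} (contract p₂) (fun g t ht => ?_) (by omega)
        fun g hg h hh hne => ?_
      · rw [mem_singleton.1 ht, contract_apply_self]
      · have := card_le_distOn_contract_add_five (x := p₂) (hM.card_le_distOn_add_two hg hh hne)
        omega
    _ = Pmax q (q - 4) := by rw [hcard]

lemma le_Pmax_sub_three (hq4 : 4 ≤ q) : Pmax q (q - 3) ≥ 2 * q * (q - 1) := by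
  have hcard : #({p₂}ᶜ : Finset α) = q := by simp [card_compl, hq]
  calc 2 * q * (q - 1) = #{g ∈ M | g p₂ ∈ ({p₂, p₀} : Finset α)} := by
        rw [hM.card_filter_apply_mem h₀₁ h₀₂ h₁₂, card_pair h₀₂.symm, hq, mul_assoc]
        rfl
    _ ≤ Pmax #({p₂}ᶜ : Finset α) (q - 3) := by
      refine card_le_Pmax_of_le_distOn {p₂} (contract p₂) (fun g t ht => ?_) (by omega)
        fun g hg h hh hne => ?_
      · rw [mem_singleton.1 ht, contract_apply_self]
      · simp only [mem_filter, mem_insert, mem_singleton] at hg hh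
        have := card_le_distOn_contract_add_four
          (hM.card_le_distOn_add_two hg.1 hh.1 hne) hg.2 hh.2
        omega
    _ = Pmax q (q - 3) := by rw [hcard]

lemma le_Pmax_pred_sub_four (hq5 : 5 ≤ q) : Pmax (q - 1) (q - 4) ≥ (q + 1) * (q - 1) := by
  have hcard : #({p₂, p₀}ᶜ : Finset α) = q - 1 := by
    rw [card_compl, card_pair h₀₂.symm, hq]
    rfl
  calc (q + 1) * (q - 1) =
        #{g ∈ M | g p₂ ∈ ({p₂} : Finset α) ∨ g p₀ = p₂ ∧ g p₂ ∈ ({p₀} : Finset α)} := by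
        rw [hM.card_filter_mem_or h₀₁ h₀₂ h₁₂ (by simpa using h₀₂.symm) (by simpa using h₀₂.symm),
          card_singleton, card_singleton, hq]
        obtain ⟨r, rfl⟩ : ∃ r, q = r + 1 := ⟨q - 1, by omega⟩
        simp only [add_tsub_cancel_right, Nat.reduceSubDiff, one_mul]
        ring
    _ ≤ Pmax #({p₂, p₀}ᶜ : Finset α) (q - 4) := by
      refine card_le_Pmax_of_le_distOn {p₂, p₀} (fun g => contract p₀ (contract p₂ g))
        (fun g t ht => contract_contract_apply_of_mem_pair h₀₂.symm ht) (by omega)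
        fun g hg h hh hne => ?_
      simp only [mem_filter, mem_singleton] at hg hh
      have := card_le_distOn_contract_contract_add_five
        (hM.card_le_distOn_add_two hg.1 hh.1 hne) hg.2 hh.2
      omega
    _ = Pmax (q - 1) (q - 4) := by rw [hcard]

lemma le_Pmax_pred_sub_six (hq7 : 7 ≤ q) : Pmax (q - 1) (q - 6) ≥ 2 * (q + 1) * (q - 1) := by
  have hcard : #({p₂, p₀}ᶜ : Finset α) = q - 1 := by
    rw [card_compl, card_pair h₀₂.symm, hq]
    rfl
  obtain ⟨B, hB, hB2⟩ := exists_subset_card_eq (s := ({p₂, p₀}ᶜ : Finset α)) (n := 2) (by omega)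
  calc 2 * (q + 1) * (q - 1) =
        #{g ∈ M | g p₂ ∈ ({p₂, p₀} : Finset α) ∨ g p₀ = p₂ ∧ g p₂ ∈ B} := by
        rw [hM.card_filter_mem_or h₀₁ h₀₂ h₁₂ (disjoint_of_subset_right hB disjoint_compl_right)
          fun h => by simpa using hB h, card_pair h₀₂.symm, hB2, hq]
        obtain ⟨r, rfl⟩ : ∃ r, q = r + 1 := ⟨q - 1, by omega⟩
        simp only [add_tsub_cancel_right, Nat.reduceSubDiff]
        ring
    _ ≤ Pmax #({p₂, p₀}ᶜ : Finset α) (q - 6) := by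
      refine card_le_Pmax_of_le_distOn {p₂, p₀} (fun g => contract p₀ (contract p₂ g))
        (fun g t ht => contract_contract_apply_of_mem_pair h₀₂.symm ht) (by omega)
        fun g hg h hh hne => ?_
      have hpos (g : Perm α) (hg : g p₂ ∈ ({p₂, p₀} : Finset α) ∨ g p₀ = p₂ ∧ g p₂ ∈ B) :
          g p₂ = p₀ ∨ g p₂ = p₂ ∨ g p₀ = p₂ := by
        simp only [mem_insert, mem_singleton] at hg
        tauto
      have := card_le_distOn_contract_contract_add_seven
        (hM.card_le_distOn_add_two (mem_filter.1 hg).1 (mem_filter.1 hh).1 hne)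
        (hpos g (mem_filter.1 hg).2) (hpos h (mem_filter.1 hh).2)
      omega
    _ = Pmax (q - 1) (q - 6) := by rw [hcard]

theorem Pmax_bounds (hq7 : 7 ≤ q) :
    Pmax q (q - 4) ≥ (q + 1) * q * (q - 1) ∧
    Pmax q (q - 3) ≥ 2 * q * (q - 1) ∧
    Pmax (q - 1) (q - 4) ≥ (q + 1) * (q - 1) ∧
    Pmax (q - 1) (q - 6) ≥ 2 * (q + 1) * (q - 1) :=
  ⟨hM.le_Pmax_sub_four hq h₀₁ h₀₂ h₁₂ (by omega), hM.le_Pmax_sub_three hq h₀₁ h₀₂ h₁₂ (by omega),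
    hM.le_Pmax_pred_sub_four hq h₀₁ h₀₂ h₁₂ (by omega), hM.le_Pmax_pred_sub_six hq h₀₁ h₀₂ h₁₂ hq7⟩

end IsSharplyThreeTransitive

section ProjectiveLine
open OnePoint Matrix.GeneralLinearGroup
variable {F : Type*} [Field F] [DecidableEq F]

instance : DecidableEq (OnePoint F) := inferInstanceAs (DecidableEq (Option F))

lemma exists_smul_infty_eq (w : OnePoint F) : ∃ g : GL (Fin 2) F, g • ∞ = w := by
  cases w with
  | infty => exact ⟨1, one_smul _ _⟩
  | coe t =>
    refine ⟨mkOfDetNeZero !![t, 1; 1, 0] (by simp [Matrix.det_fin_two]), ?_⟩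
    simp [smul_infty_eq_ite, mkOfDetNeZero]

lemma exists_smul_zero_one_infty_eq_of_ne {u v : F} (huv : u ≠ v) :
    ∃ g : GL (Fin 2) F, g • ((0 : F) : OnePoint F) = u ∧ g • ((1 : F) : OnePoint F) = v ∧
      g • (∞ : OnePoint F) = ∞ := by
  refine ⟨mkOfDetNeZero !![v - u, u; 0, 1] (by simp [Matrix.det_fin_two, sub_eq_zero, huv.symm]),
    ?_, ?_, ?_⟩ <;> simp [smul_infty_eq_ite, smul_some_eq_ite, mkOfDetNeZero]

lemma exists_smul_zero_one_infty_eq {u v w : OnePoint F} (huv : u ≠ v) (huw : u ≠ w)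
    (hvw : v ≠ w) :
    ∃ g : GL (Fin 2) F, g • ((0 : F) : OnePoint F) = u ∧ g • ((1 : F) : OnePoint F) = v ∧
      g • (∞ : OnePoint F) = w := by
  obtain ⟨g, rfl⟩ := exists_smul_infty_eq w
  obtain ⟨u, rfl⟩ : ∃ u', g • u' = u := ⟨g⁻¹ • u, smul_inv_smul g u⟩
  obtain ⟨v, rfl⟩ : ∃ v', g • v' = v := ⟨g⁻¹ • v, smul_inv_smul g v⟩
  simp only [ne_eq, smul_left_cancel_iff] at huv huw hvw
  cases u with
  | infty => exact absurd rfl huw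
  | coe a =>
  cases v with
  | infty => exact absurd rfl hvw
  | coe b =>
  obtain ⟨h, h₀, h₁, hinf⟩ :=
    exists_smul_zero_one_infty_eq_of_ne (u := a) (v := b) fun hab => huv (by rw [hab])
  exact ⟨g * h, by simp [mul_smul, h₀, h₁, hinf]⟩

lemma smul_eq_self_of_fix_zero_one_infty {k : GL (Fin 2) F}
    (h₀ : k • ((0 : F) : OnePoint F) = (0 : F)) (h₁ : k • ((1 : F) : OnePoint F) = (1 : F))
    (hinf : k • (∞ : OnePoint F) = ∞) (t : OnePoint F) : k • t = t := by
  have hc : k 1 0 = 0 := smul_infty_eq_self_iff.1 hinf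
  have hd : k 1 1 ≠ 0 := by
    intro hd
    simp [smul_some_eq_ite, hc, hd] at h₀
  have hb : k 0 1 = 0 := by simpa [smul_some_eq_ite, hc, hd] using h₀
  have ha : k 0 0 = k 1 1 := by
    simpa [smul_some_eq_ite, hc, hd, hb, div_eq_one_iff_eq hd] using h₁
  cases t with
  | infty => exact hinf
  | coe t => simp [smul_some_eq_ite, hc, hd, hb, ha]

lemma smul_eq_self_of_fix_three {k : GL (Fin 2) F} {x y z : OnePoint F} (hxy : x ≠ y)
    (hxz : x ≠ z) (hyz : y ≠ z) (hx : k • x = x) (hy : k • y = y) (hz : k • z = z)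
    (t : OnePoint F) : k • t = t := by
  obtain ⟨g, rfl, rfl, rfl⟩ := exists_smul_zero_one_infty_eq hxy hxz hyz
  have hfix := smul_eq_self_of_fix_zero_one_infty (k := g⁻¹ * k * g)
    (by simp [mul_smul, hx]) (by simp [mul_smul, hy]) (by simp [mul_smul, hz])
  calc k • t = g • (g⁻¹ * k * g) • g⁻¹ • t := by simp [mul_smul]
    _ = t := by rw [hfix, smul_inv_smul]

theorem isSharplyThreeTransitive_image_toPerm [Fintype F] :
    IsSharplyThreeTransitive
      ((univ : Finset (GL (Fin 2) F)).image (MulAction.toPerm (β := OnePoint F))) := by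
  intro x y z u v w hxy hxz hyz huv huw hvw
  obtain ⟨g, gx, gy, gz⟩ := exists_smul_zero_one_infty_eq hxy hxz hyz
  obtain ⟨h, hu, hv, hw⟩ := exists_smul_zero_one_infty_eq huv huw hvw
  have hx : (h * g⁻¹) • x = u := by simp [mul_smul, ← gx, hu]
  have hy : (h * g⁻¹) • y = v := by simp [mul_smul, ← gy, hv]
  have hz : (h * g⁻¹) • z = w := by simp [mul_smul, ← gz, hw]
  refine ⟨MulAction.toPerm (h * g⁻¹), ⟨mem_image_of_mem _ (mem_univ _), hx, hy, hz⟩, ?_⟩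
  rintro σ ⟨hσ, hσx, hσy, hσz⟩
  obtain ⟨k, -, rfl⟩ := mem_image.1 hσ
  simp only [MulAction.toPerm_apply] at hσx hσy hσz
  ext t
  have hfix := smul_eq_self_of_fix_three (k := (h * g⁻¹)⁻¹ * k) hxy hxz hyz
    (by rw [mul_smul, hσx, inv_smul_eq_iff, hx]) (by rw [mul_smul, hσy, inv_smul_eq_iff, hy])
    (by rw [mul_smul, hσz, inv_smul_eq_iff, hz]) t
  rw [mul_smul, inv_smul_eq_iff] at hfix
  simpa using hfix

end ProjectiveLine

theorem stmt19 (q : ℕ) (hq : IsPrimePow q) (h7 : 7 ≤ q) :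
    Pmax q (q - 4) ≥ (q + 1) * q * (q - 1) ∧
    Pmax q (q - 3) ≥ 2 * q * (q - 1) ∧
    Pmax (q - 1) (q - 4) ≥ (q + 1) * (q - 1) ∧
    Pmax (q - 1) (q - 6) ≥ 2 * (q + 1) * (q - 1) := by
  obtain ⟨p, k, hp, hk, rfl⟩ := hq
  have : Fact p.Prime := ⟨hp.nat_prime⟩
  let : Fintype (GaloisField p k) := Fintype.ofFinite _
  classical
  have hcard : Fintype.card (OnePoint (GaloisField p k)) = p ^ k + 1 := by
    rw [← GaloisField.card p k hk.ne', Nat.card_eq_fintype_card]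
    exact Fintype.card_option
  have h₀₁ : ((0 : GaloisField p k) : OnePoint (GaloisField p k)) ≠ (1 : GaloisField p k) := by
    simp
  exact isSharplyThreeTransitive_image_toPerm.Pmax_bounds hcard h₀₁ (OnePoint.coe_ne_infty _)
    (OnePoint.coe_ne_infty _) h7
end
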